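/- arXiv:0804.3926 — 8 statements merged into one kernel-verified Lean document; each statement's English description precedes it below -/
import Mathlib

section
/- If Φ is a nonempty compact convex subset of the simplex of pmfs on a finite set X, and p is a strictly positive pmf on X, then there exists a pmf q̂ ∈ Φ attaining inf_{q∈Φ} L(q||p); if additionally every element of Φ is strictly positive, the minimizer is unique. -/
open Finset Real

def simplexSet (X : Type*) [Fintype X] : Set (X → ℝ) :=
  {p | (∀ x, 0 ≤ p x) ∧ ∑ x, p x = 1}

/-- L-divergence with values in `(-∞, ⊤]`. -/
noncomputable def Ldiv {X : Type*} [Fintype X] (q p : X → ℝ) : EReal :=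
  ∑ x, if q x = 0 ∧ p x ≠ 0 then (⊤ : EReal) else ((-(p x * Real.log (q x)) : ℝ) : EReal)

lemma ereal_sum_ne_bot {X : Type*} {s : Finset X} {f : X → EReal}
    (h : ∀ x ∈ s, f x ≠ ⊥) : ∑ x ∈ s, f x ≠ ⊥ := by
  classical
  induction s using Finset.induction_on with
  | empty => simp
  | @insert a s ha ih =>
    rw [Finset.sum_insert ha]
    intro hc
    rcases EReal.add_eq_bot_iff.1 hc with h1 | h2
    · exact h _ (Finset.mem_insert_self _ _) h1
    · exact ih (fun x hx => h x (Finset.mem_insert_of_mem hx)) h2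

lemma ereal_sum_eq_top {X : Type*} {s : Finset X} {f : X → EReal}
    (h : ∀ x ∈ s, f x ≠ ⊥) {x0 : X} (hx0 : x0 ∈ s) (htop : f x0 = ⊤) :
    ∑ x ∈ s, f x = ⊤ := by
  classical
  rw [← Finset.add_sum_erase _ _ hx0, htop]
  exact EReal.top_add_of_ne_bot
    (ereal_sum_ne_bot (fun x hx => h x (Finset.mem_of_mem_erase hx)))

lemma ereal_coe_sum {X : Type*} (s : Finset X) (f : X → ℝ) :
    ((∑ x ∈ s, f x : ℝ) : EReal) = ∑ x ∈ s, ((f x : ℝ) : EReal) := by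
  classical
  induction s using Finset.induction_on with
  | empty => simp
  | @insert a s ha ih => rw [Finset.sum_insert ha, Finset.sum_insert ha, EReal.coe_add, ih]

lemma Ldiv_eq_top {X : Type*} [Fintype X] {q p : X → ℝ} (hp : ∀ x, p x ≠ 0)
    {x0 : X} (h : q x0 = 0) : Ldiv q p = ⊤ := by
  apply ereal_sum_eq_top (x0 := x0)
  · intro x _
    split
    · simp
    · exact EReal.coe_ne_bot _
  · exact Finset.mem_univ _
  · rw [if_pos ⟨h, hp x0⟩]

lemma Ldiv_eq_coe {X : Type*} [Fintype X] {q : X → ℝ} (p : X → ℝ) (hq : ∀ x, 0 < q x) :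
    Ldiv q p = ((∑ x, -(p x * Real.log (q x)) : ℝ) : EReal) := by
  rw [Ldiv, ereal_coe_sum]
  refine Finset.sum_congr rfl fun x _ => ?_
  rw [if_neg (fun hc => (hq x).ne' hc.1)]

theorem stmt3 {X : Type*} [Fintype X] (p : X → ℝ)
    (hp : p ∈ simplexSet X) (hp_pos : ∀ x, 0 < p x)
    (Φ : Set (X → ℝ)) (hΦne : Φ.Nonempty) (hΦc : IsCompact Φ) (hΦconv : Convex ℝ Φ)
    (hΦsub : Φ ⊆ simplexSet X) :
    (∃ qhat ∈ Φ, ∀ q ∈ Φ, Ldiv qhat p ≤ Ldiv q p) ∧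
    ((∀ q ∈ Φ, ∀ x, 0 < q x) →
      ∃! qhat, qhat ∈ Φ ∧ ∀ q ∈ Φ, Ldiv qhat p ≤ Ldiv q p) := by
  classical
  set F : (X → ℝ) → ℝ := fun q => ∑ x, -(p x * Real.log (q x)) with hF
  have hterm_nonneg : ∀ q ∈ simplexSet X, ∀ x, 0 ≤ -(p x * Real.log (q x)) := by
    intro q hq x
    have hqle : q x ≤ 1 := by
      have := Finset.single_le_sum (fun y _ => hq.1 y) (Finset.mem_univ x)
      rw [hq.2] at this; exact this
    have hlog : Real.log (q x) ≤ 0 := Real.log_nonpos (hq.1 x) hqle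
    nlinarith [(hp_pos x).le]
  have key : ∃ qhat ∈ Φ, ∀ q ∈ Φ, Ldiv qhat p ≤ Ldiv q p := by
    by_cases h0 : ∃ q0 ∈ Φ, ∀ x, 0 < q0 x
    · obtain ⟨q0, hq0Φ, hq0pos⟩ := h0
      set M : ℝ := F q0 with hM
      set δ : X → ℝ := fun x => Real.exp (-(M + 1) / p x) with hδ
      set K : Set (X → ℝ) := Φ ∩ {q | ∀ x, δ x ≤ q x} with hK
      have hKclosed : IsClosed {q : X → ℝ | ∀ x, δ x ≤ q x} := by
        have : {q : X → ℝ | ∀ x, δ x ≤ q x} = ⋂ x, {q | δ x ≤ q x} := by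
          ext q; simp
        rw [this]
        exact isClosed_iInter fun x => isClosed_le continuous_const (continuous_apply x)
      have hKc : IsCompact K := hΦc.inter_right hKclosed
      have hq0K : q0 ∈ K := by
        refine ⟨hq0Φ, fun x => ?_⟩
        have hterm : -(p x * Real.log (q0 x)) ≤ M := by
          have := Finset.single_le_sum
            (f := fun y => -(p y * Real.log (q0 y)))
            (fun y _ => hterm_nonneg q0 (hΦsub hq0Φ) y) (Finset.mem_univ x)
          exact this
        have hlog : -(M + 1) / p x ≤ Real.log (q0 x) := by
          rw [div_le_iff₀ (hp_pos x)]
          nlinarith [(hp_pos x)]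
        calc δ x = Real.exp (-(M + 1) / p x) := rfl
          _ ≤ Real.exp (Real.log (q0 x)) := Real.exp_le_exp.2 hlog
          _ = q0 x := Real.exp_log (hq0pos x)
      have hposK : ∀ q ∈ K, ∀ x, 0 < q x :=
        fun q hq x => lt_of_lt_of_le (Real.exp_pos _) (hq.2 x)
      have hFcont : ContinuousOn F K := by
        apply continuousOn_finset_sum
        intro x _
        apply ContinuousOn.neg
        apply ContinuousOn.mul continuousOn_const
        apply Real.continuousOn_log.comp (continuous_apply x).continuousOn
        intro q hq
        exact (hposK q hq x).ne'
      obtain ⟨qhat, hqhatK, hmin⟩ := hKc.exists_isMinOn ⟨q0, hq0K⟩ hFcont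
      have hqhatpos : ∀ x, 0 < qhat x := hposK qhat hqhatK
      have hFhat_le_M : F qhat ≤ M := hmin hq0K
      refine ⟨qhat, hqhatK.1, fun q hqΦ => ?_⟩
      rw [Ldiv_eq_coe p hqhatpos]
      by_cases hq : ∀ x, 0 < q x
      · rw [Ldiv_eq_coe p hq, EReal.coe_le_coe_iff]
        by_cases hqK : q ∈ K
        · exact hmin hqK
        · have : ∃ x, q x < δ x := by
            by_contra hc
            push_neg at hc
            exact hqK ⟨hqΦ, hc⟩
          obtain ⟨x, hx⟩ := this
          have h1 : Real.log (q x) < Real.log (δ x) := Real.log_lt_log (hq x) hx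
          have h2 : Real.log (δ x) = -(M + 1) / p x := Real.log_exp _
          have hterm : M + 1 < -(p x * Real.log (q x)) := by
            rw [h2] at h1
            have h3 : p x * Real.log (q x) < p x * (-(M + 1) / p x) :=
              mul_lt_mul_of_pos_left h1 (hp_pos x)
            have h4 : p x * (-(M + 1) / p x) = -(M + 1) := by
              field_simp
              rw [mul_comm]
              exact congrArg Neg.neg (mul_div_cancel_right₀ _ (hp_pos x).ne')
            linarith
          have hFq : M + 1 < F q := by
            have := Finset.single_le_sum
              (f := fun y => -(p y * Real.log (q y)))
              (fun y _ => hterm_nonneg q (hΦsub hqΦ) y) (Finset.mem_univ x)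
            calc M + 1 < -(p x * Real.log (q x)) := hterm
              _ ≤ F q := this
          linarith
      · push_neg at hq
        obtain ⟨x, hx⟩ := hq
        have hx0 : q x = 0 := le_antisymm hx ((hΦsub hqΦ).1 x)
        rw [Ldiv_eq_top (fun y => (hp_pos y).ne') hx0]
        exact le_top
    · push_neg at h0
      obtain ⟨q0, hq0⟩ := hΦne
      refine ⟨q0, hq0, fun q hq => ?_⟩
      obtain ⟨x, hx⟩ := h0 q hq
      have hx0 : q x = 0 := le_antisymm hx ((hΦsub hq).1 x)
      rw [Ldiv_eq_top (fun y => (hp_pos y).ne') hx0]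
      exact le_top
  refine ⟨key, fun hpos => ?_⟩
  obtain ⟨qhat, hqhatΦ, hmin⟩ := key
  refine ⟨qhat, ⟨hqhatΦ, hmin⟩, ?_⟩
  rintro b ⟨hbΦ, hbmin⟩
  by_contra hne
  have hbpos := hpos b hbΦ
  have hqhp := hpos qhat hqhatΦ
  have hFb_le : F b ≤ F qhat := by
    have := hbmin qhat hqhatΦ
    rw [Ldiv_eq_coe p hbpos, Ldiv_eq_coe p hqhp, EReal.coe_le_coe_iff] at this
    exact this
  have hFqh_le : F qhat ≤ F b := by
    have := hmin b hbΦ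
    rw [Ldiv_eq_coe p hbpos, Ldiv_eq_coe p hqhp, EReal.coe_le_coe_iff] at this
    exact this
  set m : X → ℝ := (1 / 2 : ℝ) • b + (1 / 2 : ℝ) • qhat with hm
  have hmΦ : m ∈ Φ := hΦconv hbΦ hqhatΦ (by norm_num) (by norm_num) (by norm_num)
  have hmpos := hpos m hmΦ
  have hmx : ∀ x, m x = (1 / 2 : ℝ) * b x + (1 / 2 : ℝ) * qhat x := by
    intro x; simp [hm]
  obtain ⟨x0, hx0⟩ : ∃ x, b x ≠ qhat x := by
    by_contra h
    push_neg at h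
    exact hne (funext h)
  have hcle : ∀ x, (1 / 2 : ℝ) * Real.log (b x) + (1 / 2 : ℝ) * Real.log (qhat x)
      ≤ Real.log (m x) := by
    intro x
    have := strictConcaveOn_log_Ioi.concaveOn.2 (Set.mem_Ioi.2 (hbpos x))
      (Set.mem_Ioi.2 (hqhp x)) (by norm_num : (0:ℝ) ≤ 1/2) (by norm_num : (0:ℝ) ≤ 1/2)
      (by norm_num)
    simpa [smul_eq_mul, hmx x] using this
  have hclt : (1 / 2 : ℝ) * Real.log (b x0) + (1 / 2 : ℝ) * Real.log (qhat x0)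
      < Real.log (m x0) := by
    have := strictConcaveOn_log_Ioi.2 (Set.mem_Ioi.2 (hbpos x0))
      (Set.mem_Ioi.2 (hqhp x0)) hx0 (by norm_num : (0:ℝ) < 1/2) (by norm_num : (0:ℝ) < 1/2)
      (by norm_num)
    simpa [smul_eq_mul, hmx x0] using this
  have hstrict : F m < (1 / 2 : ℝ) * F b + (1 / 2 : ℝ) * F qhat := by
    have hsum : F m < ∑ x, ((1 / 2 : ℝ) * -(p x * Real.log (b x))
        + (1 / 2 : ℝ) * -(p x * Real.log (qhat x))) := by
      apply Finset.sum_lt_sum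
      · intro x _
        have := hcle x
        nlinarith [hp_pos x]
      · refine ⟨x0, Finset.mem_univ _, ?_⟩
        have := hclt
        nlinarith [hp_pos x0]
    calc F m < _ := hsum
      _ = (1 / 2 : ℝ) * F b + (1 / 2 : ℝ) * F qhat := by
        rw [Finset.sum_add_distrib, ← Finset.mul_sum, ← Finset.mul_sum]
  have hFm_ge : F qhat ≤ F m := by
    have := hmin m hmΦ
    rw [Ldiv_eq_coe p hmpos, Ldiv_eq_coe p hqhp, EReal.coe_le_coe_iff] at this
    exact this
  linarith
end

section
/- Let Φ be a finite set of strictly positive pmfs on a finite set X with a strictly positive prior π on Φ, and let X₁, X₂, ... be i.i.d. from a pmf r. Define the posterior π_n(q|X₁^n) ∝ π(q)·∏_{i=1}^n q(X_i). Then for any subset Q ⊆ Φ, almost surely (1/n) log π_n(Q|X₁^n) → -(L(Q||r) - L(Φ||r)), where L(S||r) = min_{q∈S} L(q||r). -/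
open Finset Real MeasureTheory Filter

/-- L-divergence `L(q‖r) = -∑ r(x) log q(x)` (real-valued, for strictly positive `q`). -/
noncomputable def LdivR {X : Type*} [Fintype X] (q r : X → ℝ) : ℝ :=
  -∑ x, r x * Real.log (q x)

private lemma sup'_neg_eq {Θ : Type*} (S : Finset Θ) (hS : S.Nonempty) (f : Θ → ℝ) :
    S.sup' hS (fun θ => -f θ) = -(S.inf' hS f) := by
  apply le_antisymm
  · exact Finset.sup'_le _ _ fun θ hθ => neg_le_neg (Finset.inf'_le _ hθ)
  · obtain ⟨θ0, hθ0, h⟩ := Finset.exists_mem_eq_inf' hS f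
    rw [h]
    exact Finset.le_sup' (fun θ => -f θ) hθ0

private lemma tendsto_finset_sup'_aux {Θ : Type*} (S : Finset Θ) (hS : S.Nonempty)
    (g : Θ → ℕ → ℝ) (c : Θ → ℝ)
    (h : ∀ θ ∈ S, Filter.Tendsto (g θ) atTop (nhds (c θ))) :
    Filter.Tendsto (fun n => S.sup' hS (fun θ => g θ n)) atTop (nhds (S.sup' hS c)) := by
  induction S using Finset.cons_induction with
  | empty => exact absurd hS (by simp)
  | cons θ S hθ ih =>
    rcases S.eq_empty_or_nonempty with rfl | hS'
    · simp only [Finset.cons_empty, Finset.sup'_singleton]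
      exact h θ (by simp)
    · have e1 : ∀ n, (Finset.cons θ S hθ).sup' hS (fun θ' => g θ' n) =
          g θ n ⊔ S.sup' hS' (fun θ' => g θ' n) := fun n => Finset.sup'_cons hS' _
      have e2 : (Finset.cons θ S hθ).sup' hS c = c θ ⊔ S.sup' hS' c :=
        Finset.sup'_cons hS' _
      simp only [e1, e2]
      exact (h θ (by simp)).max
        ((ih hS' (fun θ' hθ' => h θ' (by simp [hθ']))))

/-- Key deterministic lemma: the normalized log of a positively weighted sum of positive
sequences converges to the max of the individual exponential rates. -/
private lemma key_lemma {Θ : Type*} (S : Finset Θ) (hS : S.Nonempty) (w : Θ → ℝ)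
    (hw : ∀ θ, 0 < w θ) (a : ℕ → Θ → ℝ) (ha : ∀ n θ, 0 < a n θ) (c : Θ → ℝ)
    (hconv : ∀ θ ∈ S, Filter.Tendsto (fun n : ℕ => (1 / (n : ℝ)) * Real.log (a n θ))
      atTop (nhds (c θ))) :
    Filter.Tendsto (fun n : ℕ => (1 / (n : ℝ)) * Real.log (∑ θ ∈ S, w θ * a n θ))
      atTop (nhds (S.sup' hS c)) := by
  obtain ⟨θs, hθs, hsup⟩ := Finset.exists_mem_eq_sup' hS c
  have hsumpos : ∀ n, 0 < ∑ θ ∈ S, w θ * a n θ := fun n =>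
    Finset.sum_pos (fun θ _ => mul_pos (hw θ) (ha n θ)) hS
  -- lower bound sequence
  have hlow : Filter.Tendsto
      (fun n : ℕ => (1 / (n : ℝ)) * Real.log (w θs) + (1 / (n : ℝ)) * Real.log (a n θs))
      atTop (nhds (S.sup' hS c)) := by
    have h1 : Filter.Tendsto (fun n : ℕ => (1 / (n : ℝ)) * Real.log (w θs))
        atTop (nhds 0) := by
      simpa using (tendsto_one_div_atTop_nhds_zero_nat.mul_const (Real.log (w θs)))
    have := h1.add (hconv θs hθs)
    rw [zero_add, ← hsup] at this
    exact this
  -- upper bound sequence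
  have hupp : Filter.Tendsto
      (fun n : ℕ => (1 / (n : ℝ)) * Real.log (S.card : ℝ) +
        S.sup' hS (fun θ => (1 / (n : ℝ)) * (Real.log (w θ) + Real.log (a n θ))))
      atTop (nhds (S.sup' hS c)) := by
    have h1 : Filter.Tendsto (fun n : ℕ => (1 / (n : ℝ)) * Real.log (S.card : ℝ))
        atTop (nhds 0) := by
      simpa using (tendsto_one_div_atTop_nhds_zero_nat.mul_const (Real.log (S.card : ℝ)))
    have h2 : Filter.Tendsto
        (fun n : ℕ => S.sup' hS (fun θ => (1 / (n : ℝ)) * (Real.log (w θ) + Real.log (a n θ))))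
        atTop (nhds (S.sup' hS c)) := by
      apply tendsto_finset_sup'_aux S hS _ c
      intro θ hθ
      have hwlog : Filter.Tendsto (fun n : ℕ => (1 / (n : ℝ)) * Real.log (w θ))
          atTop (nhds 0) := by
        simpa using (tendsto_one_div_atTop_nhds_zero_nat.mul_const (Real.log (w θ)))
      have := hwlog.add (hconv θ hθ)
      rw [zero_add] at this
      refine this.congr (fun n => by ring)
    have := h1.add h2
    rw [zero_add] at this
    exact this
  refine tendsto_of_tendsto_of_tendsto_of_le_of_le' hlow hupp ?_ ?_
  · -- lower bound holds for n ≥ 1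
    filter_upwards [eventually_ge_atTop 1] with n hn
    have hinv : (0 : ℝ) ≤ 1 / (n : ℝ) := by positivity
    have hterm : w θs * a n θs ≤ ∑ θ ∈ S, w θ * a n θ :=
      Finset.single_le_sum (fun θ _ => le_of_lt (mul_pos (hw θ) (ha n θ))) hθs
    have hlog : Real.log (w θs) + Real.log (a n θs) ≤ Real.log (∑ θ ∈ S, w θ * a n θ) := by
      rw [← Real.log_mul (ne_of_gt (hw θs)) (ne_of_gt (ha n θs))]
      exact Real.log_le_log (mul_pos (hw θs) (ha n θs)) hterm
    calc (1 / (n : ℝ)) * Real.log (w θs) + (1 / (n : ℝ)) * Real.log (a n θs)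
        = (1 / (n : ℝ)) * (Real.log (w θs) + Real.log (a n θs)) := by ring
      _ ≤ (1 / (n : ℝ)) * Real.log (∑ θ ∈ S, w θ * a n θ) :=
          mul_le_mul_of_nonneg_left hlog hinv
  · -- upper bound holds for n ≥ 1
    filter_upwards [eventually_ge_atTop 1] with n hn
    have hinv : (0 : ℝ) ≤ 1 / (n : ℝ) := by positivity
    obtain ⟨θ0, hθ0, hθ0eq⟩ := Finset.exists_mem_eq_sup' hS (fun θ => w θ * a n θ)
    have hb : 0 < w θ0 * a n θ0 := mul_pos (hw θ0) (ha n θ0)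
    have hcard : (0 : ℝ) < (S.card : ℝ) := by
      exact_mod_cast Finset.card_pos.mpr hS
    have hsum_le : ∑ θ ∈ S, w θ * a n θ ≤ (S.card : ℝ) * (w θ0 * a n θ0) := by
      rw [← hθ0eq]
      calc ∑ θ ∈ S, w θ * a n θ ≤ S.card • S.sup' hS (fun θ => w θ * a n θ) :=
            Finset.sum_le_card_nsmul S _ _ (fun θ hθ => Finset.le_sup' (fun θ => w θ * a n θ) hθ)
        _ = (S.card : ℝ) * S.sup' hS (fun θ => w θ * a n θ) := by
            rw [nsmul_eq_mul]
    have hlog : Real.log (∑ θ ∈ S, w θ * a n θ) ≤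
        Real.log (S.card : ℝ) + (Real.log (w θ0) + Real.log (a n θ0)) := by
      calc Real.log (∑ θ ∈ S, w θ * a n θ)
          ≤ Real.log ((S.card : ℝ) * (w θ0 * a n θ0)) :=
            Real.log_le_log (hsumpos n) hsum_le
        _ = Real.log (S.card : ℝ) + (Real.log (w θ0) + Real.log (a n θ0)) := by
            rw [Real.log_mul (ne_of_gt hcard) (ne_of_gt hb),
              Real.log_mul (ne_of_gt (hw θ0)) (ne_of_gt (ha n θ0))]
    calc (1 / (n : ℝ)) * Real.log (∑ θ ∈ S, w θ * a n θ)
        ≤ (1 / (n : ℝ)) * (Real.log (S.card : ℝ) + (Real.log (w θ0) + Real.log (a n θ0))) :=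
          mul_le_mul_of_nonneg_left hlog hinv
      _ = (1 / (n : ℝ)) * Real.log (S.card : ℝ) +
            (1 / (n : ℝ)) * (Real.log (w θ0) + Real.log (a n θ0)) := by ring
      _ ≤ (1 / (n : ℝ)) * Real.log (S.card : ℝ) +
            S.sup' hS (fun θ => (1 / (n : ℝ)) * (Real.log (w θ) + Real.log (a n θ))) := by
          gcongr
          exact Finset.le_sup' (fun θ => (1 / (n : ℝ)) * (Real.log (w θ) + Real.log (a n θ))) hθ0

/-- Bayesian Sanov Theorem, finite-model case: the posterior probability of `Q ⊆ Φ`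
decays exponentially at rate `L(Q‖r) - L(Φ‖r)`, almost surely. -/
theorem stmt5 {X : Type*} [Fintype X] [MeasurableSpace X] [MeasurableSingletonClass X]
    {Θ : Type*} [Fintype Θ] [Nonempty Θ]
    {Ω : Type*} [MeasurableSpace Ω] (P : Measure Ω) [IsProbabilityMeasure P]
    (r : X → ℝ) (hr : (∀ x, 0 ≤ r x) ∧ ∑ x, r x = 1)
    (q : Θ → X → ℝ)
    (hq : ∀ θ, (∀ x, 0 < q θ x) ∧ ∑ x, q θ x = 1)
    (w : Θ → ℝ) (hw_pos : ∀ θ, 0 < w θ) (hw_sum : ∑ θ, w θ = 1)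
    (Xi : ℕ → Ω → X) (hmeas : ∀ i, Measurable (Xi i))
    (hindep : ProbabilityTheory.iIndepFun Xi P)
    (hlaw : ∀ i x, P {ω | Xi i ω = x} = ENNReal.ofReal (r x))
    (Q : Finset Θ) (hQ : Q.Nonempty) :
    ∀ᵐ ω ∂P, Tendsto
      (fun n : ℕ => (1 / (n : ℝ)) * Real.log
        ((∑ θ ∈ Q, w θ * ∏ i ∈ Finset.range n, q θ (Xi i ω)) /
         (∑ θ, w θ * ∏ i ∈ Finset.range n, q θ (Xi i ω))))
      atTop
      (nhds (-(Q.inf' hQ (fun θ => LdivR (q θ) r) -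
              Finset.univ.inf' Finset.univ_nonempty (fun θ => LdivR (q θ) r)))) := by
  classical
  -- the laws of all Xi i agree
  have hmap : ∀ i, P.map (Xi i) = P.map (Xi 0) := by
    intro i
    rw [MeasureTheory.Measure.ext_iff_singleton]
    intro x
    rw [Measure.map_apply (hmeas i) (measurableSet_singleton x),
      Measure.map_apply (hmeas 0) (measurableSet_singleton x)]
    have h1 : Xi i ⁻¹' {x} = {ω | Xi i ω = x} := rfl
    have h2 : Xi 0 ⁻¹' {x} = {ω | Xi 0 ω = x} := rfl
    rw [h1, h2, hlaw i x, hlaw 0 x]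
  -- SLLN for each θ
  set c : Θ → ℝ := fun θ => ∑ x, r x * Real.log (q θ x) with hc
  have hslln : ∀ θ : Θ, ∀ᵐ ω ∂P, Tendsto
      (fun n : ℕ => (∑ i ∈ Finset.range n, Real.log (q θ (Xi i ω))) / (n : ℝ))
      atTop (nhds (c θ)) := by
    intro θ
    set f : X → ℝ := fun x => Real.log (q θ x) with hf
    have hfmeas : Measurable f := measurable_of_countable f
    set Y : ℕ → Ω → ℝ := fun i ω => f (Xi i ω) with hY
    have hYmeas : ∀ i, Measurable (Y i) := fun i => hfmeas.comp (hmeas i)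
    -- integrability of Y 0
    have hint : Integrable (Y 0) P := by
      have hfint : Integrable f (P.map (Xi 0)) := by
        have : IsProbabilityMeasure (P.map (Xi 0)) :=
          Measure.isProbabilityMeasure_map (hmeas 0).aemeasurable
        exact Integrable.of_finite
      exact (integrable_map_measure hfint.aestronglyMeasurable
        (hmeas 0).aemeasurable).mp hfint
    have hident : ∀ i, ProbabilityTheory.IdentDistrib (Y i) (Y 0) P P := by
      intro i
      exact (ProbabilityTheory.IdentDistrib.comp
        ⟨(hmeas i).aemeasurable, (hmeas 0).aemeasurable, hmap i⟩ hfmeas)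
    have hpind : Pairwise (Function.onFun (ProbabilityTheory.IndepFun · · P) Y) := by
      intro i j hij
      exact (hindep.indepFun hij).comp hfmeas hfmeas
    have hmean : (∫ ω, Y 0 ω ∂P) = c θ := by
      have h1 : (∫ ω, Y 0 ω ∂P) = ∫ x, f x ∂(P.map (Xi 0)) := by
        rw [integral_map (hmeas 0).aemeasurable hfmeas.aestronglyMeasurable]
      have h2 : ∫ x, f x ∂(P.map (Xi 0)) = ∑ x, ((P.map (Xi 0)) {x}).toReal • f x := by
        apply integral_fintype
        have : IsProbabilityMeasure (P.map (Xi 0)) :=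
          Measure.isProbabilityMeasure_map (hmeas 0).aemeasurable
        exact Integrable.of_finite
      rw [h1, h2]
      apply Finset.sum_congr rfl
      intro x _
      have : (P.map (Xi 0)) {x} = ENNReal.ofReal (r x) := by
        rw [Measure.map_apply (hmeas 0) (measurableSet_singleton x)]
        exact hlaw 0 x
      rw [this, ENNReal.toReal_ofReal (hr.1 x)]
      simp [smul_eq_mul, hf]
    have hfin := ProbabilityTheory.strong_law_ae_real Y hint hpind hident
    rw [hmean] at hfin
    exact hfin
  have hae : ∀ᵐ ω ∂P, ∀ θ : Θ, Tendsto
      (fun n : ℕ => (∑ i ∈ Finset.range n, Real.log (q θ (Xi i ω))) / (n : ℝ))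
      atTop (nhds (c θ)) := (MeasureTheory.ae_all_iff).mpr hslln
  filter_upwards [hae] with ω hω
  -- deterministic part
  set a : ℕ → Θ → ℝ := fun n θ => ∏ i ∈ Finset.range n, q θ (Xi i ω) with ha
  have hapos : ∀ n θ, 0 < a n θ := fun n θ =>
    Finset.prod_pos (fun i _ => (hq θ).1 (Xi i ω))
  have hconv : ∀ θ : Θ, Tendsto (fun n : ℕ => (1 / (n : ℝ)) * Real.log (a n θ))
      atTop (nhds (c θ)) := by
    intro θ
    refine (hω θ).congr (fun n => ?_)
    rw [ha]
    rw [Real.log_prod (fun i _ => ne_of_gt ((hq θ).1 (Xi i ω)))]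
    rw [div_eq_mul_inv, one_div, inv_mul_eq_div, div_eq_mul_inv]
  have hQconv := key_lemma Q hQ w hw_pos a hapos c (fun θ _ => hconv θ)
  have hUconv := key_lemma Finset.univ Finset.univ_nonempty w hw_pos a hapos c
    (fun θ _ => hconv θ)
  have hnum : ∀ n, 0 < ∑ θ ∈ Q, w θ * a n θ := fun n =>
    Finset.sum_pos (fun θ _ => mul_pos (hw_pos θ) (hapos n θ)) hQ
  have hden : ∀ n, 0 < ∑ θ, w θ * a n θ := fun n =>
    Finset.sum_pos (fun θ _ => mul_pos (hw_pos θ) (hapos n θ)) Finset.univ_nonempty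
  have hmain := hQconv.sub hUconv
  have heq : Q.sup' hQ c - Finset.univ.sup' Finset.univ_nonempty c =
      -(Q.inf' hQ (fun θ => LdivR (q θ) r) -
        Finset.univ.inf' Finset.univ_nonempty (fun θ => LdivR (q θ) r)) := by
    have h1 : Q.sup' hQ c = -(Q.inf' hQ (fun θ => LdivR (q θ) r)) := by
      rw [← sup'_neg_eq Q hQ (fun θ => LdivR (q θ) r)]
      apply Finset.sup'_congr _ rfl
      intro θ _
      simp [hc, LdivR]
    have h2 : Finset.univ.sup' Finset.univ_nonempty c =
        -(Finset.univ.inf' Finset.univ_nonempty (fun θ => LdivR (q θ) r)) := by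
      rw [← sup'_neg_eq Finset.univ Finset.univ_nonempty (fun θ => LdivR (q θ) r)]
      apply Finset.sup'_congr _ rfl
      intro θ _
      simp [hc, LdivR]
    rw [h1, h2]; ring
  rw [heq] at hmain
  refine hmain.congr (fun n => ?_)
  rw [Real.log_div (ne_of_gt (hnum n)) (ne_of_gt (hden n))]
  ring
end

section
/- Under the setting of the finite-model Bayesian Sanov theorem, if q̂ ∈ Φ is the unique minimizer of L(q||r) over Φ, then the posterior concentrates on q̂: almost surely π_n({q̂}|X₁^n) → 1 as n → ∞. -/
open Finset Real MeasureTheory Filter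

/-- Bayesian Law of Large Numbers, finite-model case: the posterior concentrates on the
unique minimizer of `L(·‖r)` over the model, almost surely. -/
theorem stmt6 {X : Type*} [Fintype X] [MeasurableSpace X] [MeasurableSingletonClass X]
    {Θ : Type*} [Fintype Θ] [Nonempty Θ]
    {Ω : Type*} [MeasurableSpace Ω] (P : Measure Ω) [IsProbabilityMeasure P]
    (r : X → ℝ) (hr : (∀ x, 0 ≤ r x) ∧ ∑ x, r x = 1)
    (q : Θ → X → ℝ)
    (hq : ∀ θ, (∀ x, 0 < q θ x) ∧ ∑ x, q θ x = 1)
    (w : Θ → ℝ) (hw_pos : ∀ θ, 0 < w θ) (hw_sum : ∑ θ, w θ = 1)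
    (Xi : ℕ → Ω → X) (hmeas : ∀ i, Measurable (Xi i))
    (hindep : ProbabilityTheory.iIndepFun Xi P)
    (hlaw : ∀ i x, P {ω | Xi i ω = x} = ENNReal.ofReal (r x))
    (θhat : Θ) (hmin : ∀ θ : Θ, θ ≠ θhat → LdivR (q θhat) r < LdivR (q θ) r) :
    ∀ᵐ ω ∂P, Tendsto
      (fun n : ℕ =>
        (w θhat * ∏ i ∈ Finset.range n, q θhat (Xi i ω)) /
        (∑ θ, w θ * ∏ i ∈ Finset.range n, q θ (Xi i ω)))
      atTop (nhds 1) := by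
  classical
  have hXmap : ∀ i, Measure.map (Xi i) P = Measure.map (Xi 0) P := by
    intro i
    refine Measure.ext_iff_singleton.mpr fun x => ?_
    rw [Measure.map_apply (hmeas i) (measurableSet_singleton x),
        Measure.map_apply (hmeas 0) (measurableSet_singleton x)]
    show P {ω | Xi i ω = x} = P {ω | Xi 0 ω = x}
    rw [hlaw i x, hlaw 0 x]
  set g : Θ → X → ℝ := fun θ x => Real.log (q θ x) - Real.log (q θhat x) with hgdef
  have key : ∀ θ, θ ≠ θhat → ∀ᵐ ω ∂P,
      Tendsto (fun n : ℕ => ∑ i ∈ Finset.range n, g θ (Xi i ω)) atTop atBot := by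
    intro θ hθ
    have hgmeas : Measurable (g θ) := measurable_of_finite _
    have hint : Integrable (fun ω => g θ (Xi 0 ω)) P := by
      refine ⟨(hgmeas.comp (hmeas 0)).aestronglyMeasurable, ?_⟩
      obtain ⟨C, hC⟩ : ∃ C, ∀ x, ‖g θ x‖ ≤ C := by
        rcases Finset.exists_le (Finset.univ.image fun x => ‖g θ x‖) with ⟨C, hC⟩
        exact ⟨C, fun x => hC _ (Finset.mem_image_of_mem _ (Finset.mem_univ x))⟩
      exact HasFiniteIntegral.of_bounded (ae_of_all _ fun ω => hC _)
    have hident : ∀ i, ProbabilityTheory.IdentDistrib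
        (fun ω => g θ (Xi i ω)) (fun ω => g θ (Xi 0 ω)) P P := fun i =>
      ProbabilityTheory.IdentDistrib.comp
        ⟨(hmeas i).aemeasurable, (hmeas 0).aemeasurable, hXmap i⟩ hgmeas
    have hpind : Pairwise (Function.onFun (ProbabilityTheory.IndepFun · · P) fun i ω => g θ (Xi i ω)) :=
      fun i j hij => (hindep.indepFun hij).comp hgmeas hgmeas
    have hsl := ProbabilityTheory.strong_law_ae_real (fun i ω => g θ (Xi i ω)) hint hpind hident
    have hE : (∫ ω, g θ (Xi 0 ω) ∂P) = LdivR (q θhat) r - LdivR (q θ) r := by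
      have h1 : (∫ ω, g θ (Xi 0 ω) ∂P) = ∫ x, g θ x ∂(Measure.map (Xi 0) P) :=
        (integral_map (hmeas 0).aemeasurable hgmeas.aestronglyMeasurable).symm
      rw [h1, integral_fintype _]; on_goal 2 => exact Integrable.of_finite
      simp only [Measure.real_def]
      have h2 : ∀ x : X, ((Measure.map (Xi 0) P) {x}).toReal = r x := by
        intro x
        rw [Measure.map_apply (hmeas 0) (measurableSet_singleton x)]
        show (P {ω | Xi 0 ω = x}).toReal = r x
        rw [hlaw 0 x, ENNReal.toReal_ofReal (hr.1 x)]
      simp only [h2, smul_eq_mul, hgdef, LdivR, mul_sub, Finset.sum_sub_distrib]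
      ring
    rw [hE] at hsl
    have hneg : LdivR (q θhat) r - LdivR (q θ) r < 0 := sub_neg.mpr (hmin θ hθ)
    filter_upwards [hsl] with ω hω
    have h1 : Tendsto (fun n : ℕ =>
        ((∑ i ∈ Finset.range n, g θ (Xi i ω)) / n) * n) atTop atBot :=
      hω.neg_mul_atTop hneg tendsto_natCast_atTop_atTop
    refine h1.congr' ?_
    filter_upwards [eventually_ge_atTop 1] with n hn
    have : (n : ℝ) ≠ 0 := Nat.cast_ne_zero.mpr (by omega)
    field_simp
  have keyall : ∀ᵐ ω ∂P, ∀ θ, θ ≠ θhat →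
      Tendsto (fun n : ℕ => ∑ i ∈ Finset.range n, g θ (Xi i ω)) atTop atBot := by
    rw [ae_all_iff]
    intro θ
    by_cases hθ : θ = θhat
    · exact ae_of_all _ fun ω h => absurd hθ h
    · filter_upwards [key θ hθ] with ω hω _ using hω
  filter_upwards [keyall] with ω hω
  set A : Θ → ℕ → ℝ := fun θ n => w θ * ∏ i ∈ Finset.range n, q θ (Xi i ω) with hAdef
  have hApos : ∀ θ n, 0 < A θ n := fun θ n =>
    mul_pos (hw_pos θ) (Finset.prod_pos fun i _ => (hq θ).1 _)
  have hR : ∀ θ, θ ≠ θhat → Tendsto (fun n => A θ n / A θhat n) atTop (nhds 0) := by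
    intro θ hθ
    have hRe : ∀ n, A θ n / A θhat n =
        (w θ / w θhat) * Real.exp (∑ i ∈ Finset.range n, g θ (Xi i ω)) := by
      intro n
      have hprod : ∀ θ' : Θ, Real.exp (∑ i ∈ Finset.range n, Real.log (q θ' (Xi i ω)))
          = ∏ i ∈ Finset.range n, q θ' (Xi i ω) := by
        intro θ'
        rw [Real.exp_sum]
        exact Finset.prod_congr rfl fun i _ => Real.exp_log ((hq θ').1 _)
      simp only [hgdef, Finset.sum_sub_distrib, Real.exp_sub, hprod, hAdef]
      rw [div_mul_div_comm]
    have h0 : Tendsto (fun n : ℕ =>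
        (w θ / w θhat) * Real.exp (∑ i ∈ Finset.range n, g θ (Xi i ω))) atTop (nhds 0) := by
      have := (Real.tendsto_exp_atBot.comp (hω θ hθ)).const_mul (w θ / w θhat)
      simpa using this
    exact h0.congr fun n => (hRe n).symm
  have hsum : Tendsto (fun n => ∑ θ, A θ n / A θhat n) atTop (nhds 1) := by
    have h := tendsto_finset_sum Finset.univ
      (fun θ _ => show Tendsto (fun n => A θ n / A θhat n) atTop
          (nhds (if θ = θhat then 1 else 0)) by
        by_cases hθ : θ = θhat
        · subst hθ
          simp only [if_pos rfl]
          have : (fun n => A θ n / A θ n) = fun _ => (1 : ℝ) := by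
            funext n; exact div_self (hApos θ n).ne'
          rw [this]; exact tendsto_const_nhds
        · rw [if_neg hθ]; exact hR θ hθ)
    simpa [Finset.sum_ite_eq' Finset.univ θhat (fun _ => (1:ℝ))] using h
  have hinv : Tendsto (fun n => (∑ θ, A θ n / A θhat n)⁻¹) atTop (nhds 1) := by
    have := hsum.inv₀ one_ne_zero
    simpa using this
  refine hinv.congr fun n => ?_
  rw [← Finset.sum_div, inv_div]
end

section
/- (Conditional Law of Large Numbers, finite case) Let q be a strictly positive pmf on a finite set X, and Π a convex closed subset of the simplex with nonempty interior relative to the simplex and q ∉ Π. Let p̂ be the (unique) I-projection of q on Π, and let B(p̂,ε) be the closed ε-ball in total variation around p̂. Then P(ν^n ∈ B(p̂,ε) | ν^n ∈ Π) → 1 as n → ∞, for every ε > 0. -/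
open Finset Real Filter

/-- I-divergence (KL divergence), real-valued. -/
noncomputable def Idiv {X : Type*} [Fintype X] (p q : X → ℝ) : ℝ :=
  ∑ x, p x * Real.log (p x / q x)

/-- Total variation distance. -/
noncomputable def tvDist {X : Type*} [Fintype X] (p p' : X → ℝ) : ℝ :=
  (1 / 2) * ∑ x, |p x - p' x|

/-- Empirical type of the sample `s`. -/
noncomputable def empType {X : Type*} [Fintype X] [DecidableEq X] (n : ℕ)
    (s : Fin n → X) : X → ℝ :=
  fun x => ((Finset.univ.filter (fun j => s j = x)).card : ℝ) / n

open Classical in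
/-- Probability that the empirical type of `n` i.i.d. draws from `q` lies in `Π`. -/
noncomputable def typeProb {X : Type*} [Fintype X] [DecidableEq X] (q : X → ℝ)
    (Pi : Set (X → ℝ)) (n : ℕ) : ℝ :=
  ∑ s : Fin n → X, if empType n s ∈ Pi then ∏ j, q (s j) else 0


section Aux
set_option linter.unusedSectionVars false
variable {X : Type*} [Fintype X] [DecidableEq X]

lemma sum_cnt (n : ℕ) (s : Fin n → X) :
    ∑ x, (Finset.univ.filter (fun j => s j = x)).card = n :=
  calc ∑ x, (Finset.univ.filter (fun j => s j = x)).card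
      = (Finset.univ : Finset (Fin n)).card :=
        (Finset.card_eq_sum_card_fiberwise (fun j _ => Finset.mem_univ (s j))).symm
    _ = n := by simp

lemma cnt_le (n : ℕ) (s : Fin n → X) (x : X) :
    (Finset.univ.filter (fun j => s j = x)).card ≤ n := by
  simpa using Finset.card_filter_le Finset.univ (fun j => s j = x)

lemma prod_eq_pow_cnt (n : ℕ) (s : Fin n → X) (f : X → ℝ) :
    ∏ j, f (s j) = ∏ x, f x ^ (Finset.univ.filter (fun j => s j = x)).card := by
  rw [← Finset.prod_fiberwise' Finset.univ s f]
  exact Finset.prod_congr rfl (fun x _ => (Finset.prod_const (f x)).symm) |>.symm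

lemma sum_prod_pi (n : ℕ) (F : Fin n → X → ℝ) :
    ∑ s : Fin n → X, ∏ j, F j (s j) = ∏ j, ∑ x, F j x := by
  rw [Finset.prod_univ_sum]
  rfl

end Aux
section Aux2
set_option linter.unusedSectionVars false
variable {X : Type*} [Fintype X] [DecidableEq X]

lemma empType_nonneg (n : ℕ) (s : Fin n → X) (x : X) : 0 ≤ empType n s x := by
  unfold empType; positivity

lemma empType_mem (n : ℕ) (hn : 0 < n) (s : Fin n → X) : empType n s ∈ simplexSet X := by
  refine ⟨empType_nonneg n s, ?_⟩
  unfold empType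
  rw [← Finset.sum_div]
  rw [show ∑ x, ((Finset.univ.filter (fun j => s j = x)).card : ℝ) = (n : ℝ) by
    exact_mod_cast congrArg Nat.cast (sum_cnt n s)]
  field_simp

lemma prod_pow_eq_exp {T : Finset X} (r : X → ℝ) (hr : ∀ x ∈ T, 0 < r x) (k : X → ℕ) :
    ∏ x ∈ T, r x ^ k x = Real.exp (∑ x ∈ T, (k x : ℝ) * Real.log (r x)) := by
  rw [Real.exp_sum]
  refine Finset.prod_congr rfl (fun x hx => ?_)
  rw [Real.exp_nat_mul, Real.exp_log (hr x hx)]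

lemma prodq_eq (q : X → ℝ) (hq_pos : ∀ x, 0 < q x) (n : ℕ) (hn : 0 < n) (s : Fin n → X) :
    ∏ j, q (s j) = Real.exp (-(n * Idiv (empType n s) q)) * ∏ j, (empType n s) (s j) := by
  classical
  set k : X → ℕ := fun x => (Finset.univ.filter (fun j => s j = x)).card with hk
  set T : Finset X := Finset.univ.filter (fun x => k x ≠ 0) with hT
  have hTmem : ∀ x, x ∈ T ↔ k x ≠ 0 := by intro x; simp [hT]
  have hν : ∀ x, empType n s x = (k x : ℝ) / n := fun x => rfl
  have hνpos : ∀ x ∈ T, 0 < empType n s x := by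
    intro x hx
    rw [hν]
    have := (hTmem x).1 hx
    positivity
  have hprodT : ∀ f : X → ℝ, ∏ x, f x ^ k x = ∏ x ∈ T, f x ^ k x := by
    intro f
    refine (Finset.prod_subset (Finset.subset_univ T) ?_).symm
    intro x _ hx
    have : k x = 0 := by by_contra h; exact hx ((hTmem x).2 h)
    rw [this, pow_zero]
  have hq : ∏ j, q (s j) = Real.exp (∑ x ∈ T, (k x : ℝ) * Real.log (q x)) := by
    rw [prod_eq_pow_cnt, hprodT, prod_pow_eq_exp _ (fun x _ => hq_pos x)]
  have hνp : ∏ j, (empType n s) (s j) = Real.exp (∑ x ∈ T, (k x : ℝ) * Real.log (empType n s x)) := by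
    rw [prod_eq_pow_cnt, hprodT, prod_pow_eq_exp _ hνpos]
  have hI : (n : ℝ) * Idiv (empType n s) q
      = ∑ x ∈ T, (k x : ℝ) * Real.log (empType n s x) - ∑ x ∈ T, (k x : ℝ) * Real.log (q x) := by
    rw [Idiv, Finset.mul_sum, ← Finset.sum_sub_distrib]
    refine ((Finset.sum_subset (Finset.subset_univ T) ?_).symm).trans
      (Finset.sum_congr rfl ?_)
    · intro x _ hx
      have hk0 : k x = 0 := by by_contra h; exact hx ((hTmem x).2 h)
      have : empType n s x = 0 := by rw [hν, hk0]; simp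
      rw [this]; ring
    · intro x hx
      have hkx : (n : ℝ) * empType n s x = (k x : ℝ) := by
        rw [hν]; field_simp
      have hlog : Real.log (empType n s x / q x)
          = Real.log (empType n s x) - Real.log (q x) :=
        Real.log_div (ne_of_gt (hνpos x hx)) (ne_of_gt (hq_pos x))
      rw [hlog]; rw [show (n:ℝ) * (empType n s x * (Real.log (empType n s x) - Real.log (q x)))
        = ((n:ℝ) * empType n s x) * (Real.log (empType n s x) - Real.log (q x)) by ring, hkx]
      ring
  rw [hq, hνp, hI, ← Real.exp_add]
  congr 1
  ring
end Aux2
section Aux3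
set_option linter.unusedSectionVars false
variable {X : Type*} [Fintype X] [DecidableEq X]

lemma card_image_cnt_le (n : ℕ) :
    ((Finset.univ.image (fun (s : Fin n → X) (x : X) =>
      (Finset.univ.filter (fun j => s j = x)).card)).card : ℝ) ≤ (n+1:ℝ) ^ (Fintype.card X) := by
  set c := fun (s : Fin n → X) (x : X) => (Finset.univ.filter (fun j => s j = x)).card with hc
  have h1 : (Finset.univ.image c).card ≤ Fintype.card (X → Fin (n+1)) := by
    have hinj : Set.InjOn (fun (k : X → ℕ) (x : X) =>
        (⟨min (k x) n, Nat.lt_succ_of_le (Nat.min_le_right _ _)⟩ : Fin (n+1)))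
        (Finset.univ.image c) := by
      intro k1 h1 k2 h2 heq
      simp only [Finset.coe_image, Set.mem_image] at h1 h2
      obtain ⟨s1, _, rfl⟩ := h1
      obtain ⟨s2, _, rfl⟩ := h2
      funext x
      have h0 := congrFun heq x
      have e1 : min (c s1 x) n = c s1 x := Nat.min_eq_left (cnt_le n s1 x)
      have e2 : min (c s2 x) n = c s2 x := Nat.min_eq_left (cnt_le n s2 x)
      have h3 : min (c s1 x) n = min (c s2 x) n := by simpa using h0
      rw [← e1, ← e2, h3]
    have := Finset.card_le_card_of_injOn _ (fun _ _ => Finset.mem_univ _) hinj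
    simpa using this
  calc ((Finset.univ.image c).card : ℝ) ≤ (Fintype.card (X → Fin (n+1)) : ℝ) := by exact_mod_cast h1
    _ = (n+1:ℝ) ^ (Fintype.card X) := by
        rw [Fintype.card_fun]; push_cast; simp

lemma sum_prod_emp_le (n : ℕ) (hn : 0 < n) :
    ∑ s : Fin n → X, ∏ j, empType n s (s j) ≤ (n+1:ℝ) ^ (Fintype.card X) := by
  classical
  set c := fun (s : Fin n → X) (x : X) => (Finset.univ.filter (fun j => s j = x)).card with hc
  have hfib : ∑ k ∈ Finset.univ.image c, ∑ s ∈ Finset.univ.filter (fun s => c s = k),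
      ∏ j, empType n s (s j) = ∑ s : Fin n → X, ∏ j, empType n s (s j) :=
    Finset.sum_fiberwise_of_maps_to (fun s _ => Finset.mem_image_of_mem c (Finset.mem_univ s)) _
  have hinner : ∀ k ∈ Finset.univ.image c,
      ∑ s ∈ Finset.univ.filter (fun s => c s = k), ∏ j, empType n s (s j) ≤ 1 := by
    intro k hk
    obtain ⟨s0, _, rfl⟩ := Finset.mem_image.1 hk
    have hsum : ∑ x, (c s0 x : ℝ) = (n : ℝ) := by exact_mod_cast congrArg Nat.cast (sum_cnt n s0)
    calc ∑ s ∈ Finset.univ.filter (fun s => c s = c s0), ∏ j, empType n s (s j)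
        = ∑ s ∈ Finset.univ.filter (fun s => c s = c s0), ∏ j, ((c s0 (s j) : ℝ) / n) := by
          refine Finset.sum_congr rfl (fun s hs => ?_)
          have hcs : c s = c s0 := (Finset.mem_filter.1 hs).2
          refine Finset.prod_congr rfl (fun j _ => ?_)
          show ((c s (s j) : ℝ)) / n = _
          rw [hcs]
      _ ≤ ∑ s : Fin n → X, ∏ j, ((c s0 (s j) : ℝ) / n) := by
          refine Finset.sum_le_sum_of_subset_of_nonneg (Finset.filter_subset _ _) ?_
          intro s _ _
          exact Finset.prod_nonneg (fun j _ => by positivity)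
      _ = ∏ j : Fin n, ∑ x, ((c s0 x : ℝ) / n) := sum_prod_pi n (fun _ x => (c s0 x : ℝ)/n)
      _ = 1 := by
          rw [← Finset.sum_div, hsum, div_self (by exact_mod_cast hn.ne')]
          simp
  calc ∑ s : Fin n → X, ∏ j, empType n s (s j)
      = ∑ k ∈ Finset.univ.image c, ∑ s ∈ Finset.univ.filter (fun s => c s = k),
        ∏ j, empType n s (s j) := hfib.symm
    _ ≤ ∑ k ∈ Finset.univ.image c, (1:ℝ) := Finset.sum_le_sum hinner
    _ = ((Finset.univ.image c).card : ℝ) := by simp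
    _ ≤ (n+1:ℝ) ^ (Fintype.card X) := card_image_cnt_le n

lemma typeProb_le (q : X → ℝ) (hq_pos : ∀ x, 0 < q x) (S : Set (X → ℝ)) (n : ℕ) (hn : 0 < n)
    (m : ℝ) (hm : ∀ s : Fin n → X, empType n s ∈ S → m ≤ Idiv (empType n s) q) :
    typeProb q S n ≤ (n+1:ℝ) ^ (Fintype.card X) * Real.exp (-(n*m)) := by
  classical
  unfold typeProb
  have hterm : ∀ s : Fin n → X,
      (if empType n s ∈ S then ∏ j, q (s j) else 0)
        ≤ Real.exp (-(n*m)) * ∏ j, empType n s (s j) := by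
    intro s
    have hprodnn : (0:ℝ) ≤ ∏ j, empType n s (s j) :=
      Finset.prod_nonneg (fun j _ => empType_nonneg n s (s j))
    by_cases h : empType n s ∈ S
    · rw [if_pos h, prodq_eq q hq_pos n hn s]
      refine mul_le_mul_of_nonneg_right ?_ hprodnn
      exact Real.exp_le_exp.2 (by nlinarith [hm s h])
    · rw [if_neg h]
      positivity
  calc (∑ s : Fin n → X, if empType n s ∈ S then ∏ j, q (s j) else 0)
      ≤ ∑ s : Fin n → X, Real.exp (-(n*m)) * ∏ j, empType n s (s j) :=
        Finset.sum_le_sum (fun s _ => hterm s)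
    _ = Real.exp (-(n*m)) * ∑ s : Fin n → X, ∏ j, empType n s (s j) := by
        rw [Finset.mul_sum]
    _ ≤ Real.exp (-(n*m)) * (n+1:ℝ) ^ (Fintype.card X) := by
        exact mul_le_mul_of_nonneg_left (sum_prod_emp_le n hn) (Real.exp_nonneg _)
    _ = _ := by ring

end Aux3
section Aux4
set_option linter.unusedSectionVars false
variable {X : Type*} [Fintype X] [DecidableEq X]

lemma sum_w_eq_one (n : ℕ) (r : X → ℝ) (hr1 : ∑ y, r y = 1) :
    ∑ s : Fin n → X, ∏ j, r (s j) = 1 := by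
  rw [sum_prod_pi n (fun _ y => r y)]
  simp [hr1]

lemma cheb (r : X → ℝ) (hr0 : ∀ y, 0 ≤ r y) (hr1 : ∑ y, r y = 1) (n : ℕ) (x : X) :
    ∑ s : Fin n → X, (∏ j, r (s j)) *
      (((Finset.univ.filter (fun j => s j = x)).card : ℝ) - n * r x)^2 ≤ n := by
  classical
  set g : X → ℝ := fun y => (if y = x then (1:ℝ) else 0) - r x with hg
  have hrx1 : r x ≤ 1 := by
    rw [← hr1]
    exact Finset.single_le_sum (fun y _ => hr0 y) (Finset.mem_univ x)
  have hgy : ∀ y, |g y| ≤ 1 := by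
    intro y
    rw [hg, abs_le]
    constructor <;> [skip; skip] <;> by_cases h : y = x <;> simp [h] <;> nlinarith [hr0 x, hrx1]
  have hsumrg : ∑ y, r y * g y = 0 := by
    rw [hg]
    simp only [mul_sub]
    rw [Finset.sum_sub_distrib]
    have h1 : ∑ y, r y * (if y = x then (1:ℝ) else 0) = r x := by
      rw [Finset.sum_congr rfl (fun y _ => mul_ite (y = x) (r y) 1 0)]
      simp
    rw [h1]
    rw [← Finset.sum_mul, hr1, one_mul]
    ring
  have hsumrg2 : ∑ y, r y * (g y * g y) ≤ 1 := by
    rw [← hr1]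
    refine Finset.sum_le_sum (fun y _ => ?_)
    have h2 : g y * g y ≤ 1 := by
      have := abs_le.1 (hgy y)
      nlinarith
    calc r y * (g y * g y) ≤ r y * 1 := mul_le_mul_of_nonneg_left h2 (hr0 y)
      _ = r y := mul_one _
  have hcard : ∀ s : Fin n → X,
      ((Finset.univ.filter (fun j => s j = x)).card : ℝ) - n * r x = ∑ j, g (s j) := by
    intro s
    have h2 : ((Finset.univ.filter (fun j => s j = x)).card : ℝ)
        = ∑ j, (if s j = x then (1:ℝ) else 0) := by
      rw [Finset.card_filter]
      push_cast
      exact Finset.sum_congr rfl (fun j _ => by split_ifs <;> simp)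
    rw [hg]
    rw [Finset.sum_sub_distrib, Finset.sum_const, Finset.card_univ, Fintype.card_fin,
      ← h2, nsmul_eq_mul]
  -- off-diagonal terms vanish
  have hoff : ∀ j j' : Fin n, j ≠ j' →
      ∑ s : Fin n → X, (∏ i, r (s i)) * (g (s j) * g (s j')) = 0 := by
    intro j j' hjj
    have hrw : ∀ s : Fin n → X, (∏ i, r (s i)) * (g (s j) * g (s j'))
        = ∏ i, (r (s i) * ((if j = i then g (s i) else 1) * (if j' = i then g (s i) else 1))) := by
      intro s
      rw [Finset.prod_mul_distrib, Finset.prod_mul_distrib]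
      simp [Finset.prod_ite_eq]
    rw [Finset.sum_congr rfl (fun s _ => hrw s),
      sum_prod_pi n (fun i y => r y * ((if j = i then g y else 1) * (if j' = i then g y else 1)))]
    refine Finset.prod_eq_zero (Finset.mem_univ j) ?_
    simpa [Ne.symm hjj] using hsumrg
  have hdiag : ∀ j : Fin n,
      ∑ s : Fin n → X, (∏ i, r (s i)) * (g (s j) * g (s j)) ≤ 1 := by
    intro j
    have hrw : ∀ s : Fin n → X, (∏ i, r (s i)) * (g (s j) * g (s j))
        = ∏ i, (r (s i) * (if j = i then g (s i) * g (s i) else 1)) := by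
      intro s
      rw [Finset.prod_mul_distrib]
      simp [Finset.prod_ite_eq]
    rw [Finset.sum_congr rfl (fun s _ => hrw s),
      sum_prod_pi n (fun i y => r y * (if j = i then g y * g y else 1))]
    have : ∀ i : Fin n, (∑ y, r y * (if j = i then g y * g y else 1))
        = (if j = i then ∑ y, r y * (g y * g y) else 1) := by
      intro i
      by_cases h : j = i <;> simp [h, hr1]
    rw [Finset.prod_congr rfl (fun i _ => this i), Finset.prod_ite_eq]
    simpa using hsumrg2
  calc ∑ s : Fin n → X, (∏ j, r (s j)) *
        (((Finset.univ.filter (fun j => s j = x)).card : ℝ) - n * r x)^2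
      = ∑ s : Fin n → X, ∑ j, ∑ j', (∏ i, r (s i)) * (g (s j) * g (s j')) := by
        refine Finset.sum_congr rfl (fun s _ => ?_)
        rw [hcard s, sq, Finset.sum_mul_sum]
        rw [Finset.mul_sum]
        exact Finset.sum_congr rfl (fun j _ => by rw [Finset.mul_sum])
    _ = ∑ j, ∑ j' : Fin n, ∑ s : Fin n → X, (∏ i, r (s i)) * (g (s j) * g (s j')) := by
        rw [Finset.sum_comm]
        exact Finset.sum_congr rfl (fun j _ => Finset.sum_comm)
    _ ≤ ∑ j, ∑ j' : Fin n, (if j = j' then (1:ℝ) else 0) := by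
        refine Finset.sum_le_sum (fun j _ => Finset.sum_le_sum (fun j' _ => ?_))
        by_cases h : j = j'
        · subst h; rw [if_pos rfl]; exact hdiag j
        · rw [if_neg h, hoff j j' h]
    _ = ∑ j : Fin n, (1:ℝ) := Finset.sum_congr rfl (fun j _ => by simp)
    _ = n := by simp

end Aux4
section Aux5
set_option linter.unusedSectionVars false
variable {X : Type*} [Fintype X] [DecidableEq X]

open Classical in
lemma markov_bound (r : X → ℝ) (hr0 : ∀ y, 0 ≤ r y) (hr1 : ∑ y, r y = 1)
    (n : ℕ) (hn : 0 < n) (ρ : ℝ) (hρ : 0 < ρ) (x : X) :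
    ∑ s : Fin n → X, (if ρ ≤ |empType n s x - r x| then ∏ j, r (s j) else 0)
      ≤ 1/((n:ℝ) * ρ^2) := by
  have hnpos : (0:ℝ) < n := by exact_mod_cast hn
  have key : ∀ s : Fin n → X,
      (if ρ ≤ |empType n s x - r x| then ∏ j, r (s j) else 0)
        ≤ (1/((n:ℝ)^2 * ρ^2)) * ((∏ j, r (s j)) *
            (((Finset.univ.filter (fun j => s j = x)).card : ℝ) - n * r x)^2) := by
    intro s
    have hw : (0:ℝ) ≤ ∏ j, r (s j) := Finset.prod_nonneg (fun j _ => hr0 _)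
    by_cases h : ρ ≤ |empType n s x - r x|
    · rw [if_pos h]
      have hce : ((Finset.univ.filter (fun j => s j = x)).card : ℝ) - n * r x
          = n * (empType n s x - r x) := by
        have : empType n s x = ((Finset.univ.filter (fun j => s j = x)).card : ℝ) / n := rfl
        rw [this]
        field_simp
      rw [hce]
      have h2 : ((n:ℝ) * (empType n s x - r x))^2 ≥ (n:ℝ)^2 * ρ^2 := by
        have : ρ^2 ≤ (empType n s x - r x)^2 := by
          have := abs_nonneg (empType n s x - r x)
          nlinarith [sq_abs (empType n s x - r x)]
        nlinarith
      have h3 : (0:ℝ) < (n:ℝ)^2 * ρ^2 := by positivity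
      rw [div_mul_eq_mul_div, one_mul, le_div_iff₀ h3]
      nlinarith
    · rw [if_neg h]
      positivity
  calc ∑ s : Fin n → X, (if ρ ≤ |empType n s x - r x| then ∏ j, r (s j) else 0)
      ≤ ∑ s : Fin n → X, (1/((n:ℝ)^2 * ρ^2)) * ((∏ j, r (s j)) *
            (((Finset.univ.filter (fun j => s j = x)).card : ℝ) - n * r x)^2) :=
        Finset.sum_le_sum (fun s _ => key s)
    _ = (1/((n:ℝ)^2 * ρ^2)) * ∑ s : Fin n → X, ((∏ j, r (s j)) *
            (((Finset.univ.filter (fun j => s j = x)).card : ℝ) - n * r x)^2) := by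
        rw [Finset.mul_sum]
    _ ≤ (1/((n:ℝ)^2 * ρ^2)) * n := by
        refine mul_le_mul_of_nonneg_left (cheb r hr0 hr1 n x) (by positivity)
    _ = 1/((n:ℝ) * ρ^2) := by
        field_simp

open Classical in
lemma good_mass (r : X → ℝ) (hr0 : ∀ y, 0 ≤ r y) (hr1 : ∑ y, r y = 1)
    (n : ℕ) (hn : 0 < n) (ρ : ℝ) (hρ : 0 < ρ)
    (hN : (Fintype.card X : ℝ) / ((n:ℝ) * ρ^2) ≤ 1/2) :
    (1/2 : ℝ) ≤ ∑ s : Fin n → X,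
      (if (∀ x, |empType n s x - r x| < ρ) then ∏ j, r (s j) else 0) := by
  have hnpos : (0:ℝ) < n := by exact_mod_cast hn
  have hw : ∀ s : Fin n → X, (0:ℝ) ≤ ∏ j, r (s j) :=
    fun s => Finset.prod_nonneg (fun j _ => hr0 _)
  have hsplit : ∑ s : Fin n → X, ∏ j, r (s j)
      = (∑ s : Fin n → X, (if (∀ x, |empType n s x - r x| < ρ) then ∏ j, r (s j) else 0))
        + ∑ s : Fin n → X, (if ¬ (∀ x, |empType n s x - r x| < ρ) then ∏ j, r (s j) else 0) := by
    rw [← Finset.sum_add_distrib]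
    refine Finset.sum_congr rfl (fun s _ => ?_)
    by_cases h : (∀ x, |empType n s x - r x| < ρ)
    · rw [if_pos h, if_neg (not_not_intro h), add_zero]
    · rw [if_neg h, if_pos h, zero_add]
  have hbad : ∑ s : Fin n → X, (if ¬ (∀ x, |empType n s x - r x| < ρ) then ∏ j, r (s j) else 0)
      ≤ 1/2 := by
    have hterm : ∀ s : Fin n → X,
        (if ¬ (∀ x, |empType n s x - r x| < ρ) then ∏ j, r (s j) else 0)
          ≤ ∑ x, (if ρ ≤ |empType n s x - r x| then ∏ j, r (s j) else 0) := by
      intro s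
      by_cases h : (∀ x, |empType n s x - r x| < ρ)
      · rw [if_neg (not_not_intro h)]
        refine Finset.sum_nonneg (fun x _ => ?_)
        by_cases hx : ρ ≤ |empType n s x - r x|
        · rw [if_pos hx]; exact hw s
        · rw [if_neg hx]
      · rw [if_pos h]
        push_neg at h
        obtain ⟨x0, hx0⟩ := h
        calc ∏ j, r (s j)
            = (if ρ ≤ |empType n s x0 - r x0| then ∏ j, r (s j) else 0) := by
              rw [if_pos hx0]
          _ ≤ ∑ x, (if ρ ≤ |empType n s x - r x| then ∏ j, r (s j) else 0) := by
              refine Finset.single_le_sum (f := fun x =>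
                (if ρ ≤ |empType n s x - r x| then ∏ j, r (s j) else 0)) (fun x _ => ?_)
                (Finset.mem_univ x0)
              by_cases hx : ρ ≤ |empType n s x - r x|
              · rw [if_pos hx]; exact hw s
              · rw [if_neg hx]
    calc ∑ s : Fin n → X, (if ¬ (∀ x, |empType n s x - r x| < ρ) then ∏ j, r (s j) else 0)
        ≤ ∑ s : Fin n → X, ∑ x, (if ρ ≤ |empType n s x - r x| then ∏ j, r (s j) else 0) :=
          Finset.sum_le_sum (fun s _ => hterm s)
      _ = ∑ x, ∑ s : Fin n → X, (if ρ ≤ |empType n s x - r x| then ∏ j, r (s j) else 0) :=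
          Finset.sum_comm
      _ ≤ ∑ x : X, 1/((n:ℝ) * ρ^2) :=
          Finset.sum_le_sum (fun x _ => markov_bound r hr0 hr1 n hn ρ hρ x)
      _ = (Fintype.card X : ℝ) / ((n:ℝ) * ρ^2) := by
          rw [Finset.sum_const, Finset.card_univ, nsmul_eq_mul]
          ring
      _ ≤ 1/2 := hN
  have h1 : ∑ s : Fin n → X, ∏ j, r (s j) = 1 := sum_w_eq_one n r hr1
  linarith [hsplit, hbad, h1]

end Aux5
section Aux6
set_option linter.unusedSectionVars false
variable {X : Type*} [Fintype X] [DecidableEq X]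

lemma prodq_ge (q : X → ℝ) (hq_pos : ∀ x, 0 < q x)
    (r : X → ℝ) (hr_pos : ∀ x, 0 < r x)
    (n : ℕ) (hn : 0 < n) (ρ : ℝ) (s : Fin n → X)
    (hgood : ∀ x, |empType n s x - r x| < ρ) :
    Real.exp (-((n:ℝ) * (Idiv r q + ρ * ∑ x, |Real.log (q x / r x)|))) * (∏ j, r (s j))
      ≤ ∏ j, q (s j) := by
  have hnpos : (0:ℝ) < n := by exact_mod_cast hn
  set k : X → ℕ := fun x => (Finset.univ.filter (fun j => s j = x)).card with hk
  have hq : ∏ j, q (s j) = Real.exp (∑ x, (k x : ℝ) * Real.log (q x)) := by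
    rw [prod_eq_pow_cnt, prod_pow_eq_exp _ (fun x _ => hq_pos x)]
  have hr : ∏ j, r (s j) = Real.exp (∑ x, (k x : ℝ) * Real.log (r x)) := by
    rw [prod_eq_pow_cnt, prod_pow_eq_exp _ (fun x _ => hr_pos x)]
  rw [hq, hr, ← Real.exp_add, Real.exp_le_exp]
  have hsplit : ∑ x, (k x : ℝ) * Real.log (q x) = (∑ x, (k x : ℝ) * Real.log (r x))
      + ∑ x, (k x : ℝ) * (Real.log (q x) - Real.log (r x)) := by
    rw [← Finset.sum_add_distrib]
    exact Finset.sum_congr rfl (fun x _ => by ring)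
  have hkemp : ∀ x, (k x : ℝ) = n * empType n s x := by
    intro x
    show (k x : ℝ) = n * ((k x : ℝ) / n)
    field_simp
  have hlogdiv : ∀ x, Real.log (q x / r x) = Real.log (q x) - Real.log (r x) :=
    fun x => Real.log_div (ne_of_gt (hq_pos x)) (ne_of_gt (hr_pos x))
  have hmain : -((n:ℝ) * (Idiv r q + ρ * ∑ x, |Real.log (q x / r x)|))
      ≤ ∑ x, (k x : ℝ) * (Real.log (q x) - Real.log (r x)) := by
    have h1 : ∑ x, (k x : ℝ) * (Real.log (q x) - Real.log (r x))
        = (n:ℝ) * ∑ x, empType n s x * Real.log (q x / r x) := by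
      rw [Finset.mul_sum]
      refine Finset.sum_congr rfl (fun x _ => ?_)
      rw [hkemp x, hlogdiv x]
      ring
    have h2 : ∑ x, empType n s x * Real.log (q x / r x)
        = (∑ x, r x * Real.log (q x / r x))
          + ∑ x, (empType n s x - r x) * Real.log (q x / r x) := by
      rw [← Finset.sum_add_distrib]
      exact Finset.sum_congr rfl (fun x _ => by ring)
    have h3 : ∑ x, r x * Real.log (q x / r x) = - Idiv r q := by
      rw [Idiv, ← Finset.sum_neg_distrib]
      refine Finset.sum_congr rfl (fun x _ => ?_)
      rw [hlogdiv x, Real.log_div (ne_of_gt (hr_pos x)) (ne_of_gt (hq_pos x))]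
      ring
    have h4 : -(ρ * ∑ x, |Real.log (q x / r x)|)
        ≤ ∑ x, (empType n s x - r x) * Real.log (q x / r x) := by
      have : ∀ x, -(ρ * |Real.log (q x / r x)|)
          ≤ (empType n s x - r x) * Real.log (q x / r x) := by
        intro x
        have habs : |(empType n s x - r x) * Real.log (q x / r x)|
            ≤ ρ * |Real.log (q x / r x)| := by
          rw [abs_mul]
          exact mul_le_mul_of_nonneg_right (le_of_lt (hgood x)) (abs_nonneg _)
        linarith [neg_abs_le ((empType n s x - r x) * Real.log (q x / r x))]
      calc -(ρ * ∑ x, |Real.log (q x / r x)|)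
          = ∑ x, -(ρ * |Real.log (q x / r x)|) := by
            rw [Finset.sum_neg_distrib, ← Finset.mul_sum]
        _ ≤ _ := Finset.sum_le_sum (fun x _ => this x)
    rw [h1, h2, h3]
    have := mul_le_mul_of_nonneg_left (add_le_add_right h4 (- Idiv r q)) (le_of_lt hnpos)
    calc -((n:ℝ) * (Idiv r q + ρ * ∑ x, |Real.log (q x / r x)|))
        = (n:ℝ) * (- Idiv r q + -(ρ * ∑ x, |Real.log (q x / r x)|)) := by ring
      _ ≤ (n:ℝ) * (- Idiv r q + ∑ x, (empType n s x - r x) * Real.log (q x / r x)) := this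
  linarith [hmain]

open Classical in
lemma typeProb_ge (q : X → ℝ) (hq_pos : ∀ x, 0 < q x)
    (r : X → ℝ) (hr_pos : ∀ x, 0 < r x) (hr1 : ∑ y, r y = 1)
    (ρ : ℝ) (hρ : 0 < ρ) (S : Set (X → ℝ))
    (hS : ∀ p ∈ simplexSet X, (∀ x, |p x - r x| < ρ) → p ∈ S)
    (n : ℕ) (hn : 0 < n)
    (hN : (Fintype.card X : ℝ) / ((n:ℝ) * ρ^2) ≤ 1/2) :
    (1/2) * Real.exp (-((n:ℝ) * (Idiv r q + ρ * ∑ x, |Real.log (q x / r x)|)))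
      ≤ typeProb q S n := by
  set E := Real.exp (-((n:ℝ) * (Idiv r q + ρ * ∑ x, |Real.log (q x / r x)|))) with hE
  have hterm : ∀ s : Fin n → X,
      (if (∀ x, |empType n s x - r x| < ρ) then E * ∏ j, r (s j) else 0)
        ≤ (if empType n s ∈ S then ∏ j, q (s j) else 0) := by
    intro s
    by_cases h : (∀ x, |empType n s x - r x| < ρ)
    · rw [if_pos h, if_pos (hS _ (empType_mem n hn s) h)]
      exact prodq_ge q hq_pos r hr_pos n hn ρ s h
    · rw [if_neg h]
      by_cases h2 : empType n s ∈ S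
      · rw [if_pos h2]
        exact Finset.prod_nonneg (fun j _ => le_of_lt (hq_pos _))
      · rw [if_neg h2]
  calc (1/2) * E ≤ (∑ s : Fin n → X,
        (if (∀ x, |empType n s x - r x| < ρ) then ∏ j, r (s j) else 0)) * E := by
        refine mul_le_mul_of_nonneg_right ?_ (Real.exp_nonneg _)
        exact good_mass r (fun y => le_of_lt (hr_pos y)) hr1 n hn ρ hρ hN
    _ = ∑ s : Fin n → X, (if (∀ x, |empType n s x - r x| < ρ) then E * ∏ j, r (s j) else 0) := by
        rw [Finset.sum_mul]
        refine Finset.sum_congr rfl (fun s _ => ?_)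
        by_cases h : (∀ x, |empType n s x - r x| < ρ)
        · rw [if_pos h, if_pos h]; ring
        · rw [if_neg h, if_neg h, zero_mul]
    _ ≤ ∑ s : Fin n → X, (if empType n s ∈ S then ∏ j, q (s j) else 0) :=
        Finset.sum_le_sum (fun s _ => hterm s)
    _ = typeProb q S n := rfl

end Aux6
section Aux7
set_option linter.unusedSectionVars false
variable {X : Type*} [Fintype X] [DecidableEq X]

lemma Idiv_eq (q : X → ℝ) (hq_pos : ∀ x, 0 < q x) (p : X → ℝ) :
    Idiv p q = ∑ x, (p x * Real.log (p x) - p x * Real.log (q x)) := by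
  rw [Idiv]
  refine Finset.sum_congr rfl (fun x _ => ?_)
  by_cases h : p x = 0
  · rw [h]; ring
  · rw [Real.log_div h (ne_of_gt (hq_pos x))]; ring

lemma Idiv_continuous (q : X → ℝ) (hq_pos : ∀ x, 0 < q x) :
    Continuous (fun p : X → ℝ => Idiv p q) := by
  have : (fun p : X → ℝ => Idiv p q)
      = fun p : X → ℝ => ∑ x, (p x * Real.log (p x) - p x * Real.log (q x)) := by
    funext p; exact Idiv_eq q hq_pos p
  rw [this]
  refine continuous_finset_sum _ (fun x _ => Continuous.sub ?_ ?_)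
  · exact Real.continuous_mul_log.comp (continuous_apply x)
  · exact (continuous_apply x).mul continuous_const

lemma tvDist_continuous (phat : X → ℝ) :
    Continuous (fun p : X → ℝ => tvDist p phat) := by
  unfold tvDist
  refine continuous_const.mul (continuous_finset_sum _ (fun x _ => ?_))
  exact ((continuous_apply x).sub continuous_const).abs

lemma tvDist_self (p : X → ℝ) : tvDist p p = 0 := by
  unfold tvDist; simp

lemma simplex_isCompact : IsCompact (simplexSet X) := by
  have hclosed : IsClosed (simplexSet X) := by
    have h1 : simplexSet X = (⋂ x, {p : X → ℝ | 0 ≤ p x}) ∩ {p | ∑ x, p x = 1} := by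
      ext p; simp [simplexSet, Set.mem_iInter]
    rw [h1]
    refine IsClosed.inter (isClosed_iInter (fun x => ?_)) ?_
    · exact isClosed_le continuous_const (continuous_apply x)
    · exact isClosed_eq (continuous_finset_sum _ (fun x _ => continuous_apply x)) continuous_const
  have hbdd : Bornology.IsBounded (simplexSet X) := by
    refine (Metric.isBounded_iff_subset_closedBall 0).2 ⟨1, fun p hp => ?_⟩
    rw [Metric.mem_closedBall]
    refine dist_pi_le_iff (by norm_num) |>.2 (fun x => ?_)
    rw [Real.dist_eq]
    have h1 : p x ≤ 1 := by
      rw [← hp.2]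
      exact Finset.single_le_sum (fun y _ => hp.1 y) (Finset.mem_univ x)
    have h2 : 0 ≤ p x := hp.1 x
    rw [abs_le]
    constructor <;> simp <;> linarith
  exact Metric.isCompact_of_isClosed_isBounded hclosed hbdd

lemma tail_tendsto (D : ℕ) (δ : ℝ) (hδ : 0 < δ) (c : ℝ) :
    Tendsto (fun n : ℕ => c * (n+1:ℝ)^D * Real.exp (-(δ*n))) atTop (nhds 0) := by
  have h1 : Tendsto (fun y : ℝ => y^D * Real.exp (-y)) atTop (nhds 0) :=
    tendsto_pow_mul_exp_neg_atTop_nhds_zero D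
  have h2 : Tendsto (fun n : ℕ => δ*((n:ℝ)+1)) atTop atTop := by
    refine Tendsto.const_mul_atTop hδ ?_
    exact tendsto_atTop_add_const_right _ 1 tendsto_natCast_atTop_atTop
  have h3 : Tendsto (fun n : ℕ => (δ*((n:ℝ)+1))^D * Real.exp (-(δ*((n:ℝ)+1))))
      atTop (nhds 0) := h1.comp h2
  have h4 := h3.const_mul (c * Real.exp δ / δ^D)
  rw [mul_zero] at h4
  refine h4.congr (fun n => ?_)
  have hδD : (δ:ℝ)^D ≠ 0 := by positivity
  field_simp
  have he : Real.exp δ * Real.exp (-(δ * ((n:ℝ)+1))) = Real.exp (-(δ * (n:ℝ))) := by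
    rw [← Real.exp_add]; congr 1; ring
  rw [mul_pow]
  linear_combination (c * ((n:ℝ)+1)^D * δ^D) * he

end Aux7
section Aux8
set_option linter.unusedSectionVars false
variable {X : Type*} [Fintype X] [DecidableEq X]

lemma typeProb_nonneg (q : X → ℝ) (hq_pos : ∀ x, 0 < q x) (S : Set (X → ℝ)) (n : ℕ) :
    0 ≤ typeProb q S n := by
  unfold typeProb
  refine Finset.sum_nonneg (fun s _ => ?_)
  by_cases h : empType n s ∈ S
  · rw [if_pos h]; exact Finset.prod_nonneg (fun j _ => le_of_lt (hq_pos _))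
  · rw [if_neg h]

lemma typeProb_split (q : X → ℝ) (S T : Set (X → ℝ)) (n : ℕ) :
    typeProb q (S ∩ T) n + typeProb q (S \ T) n = typeProb q S n := by
  unfold typeProb
  rw [← Finset.sum_add_distrib]
  refine Finset.sum_congr rfl (fun s _ => ?_)
  by_cases hS : empType n s ∈ S
  · by_cases hT : empType n s ∈ T
    · rw [if_pos ⟨hS, hT⟩, if_neg (fun h => h.2 hT), if_pos hS, add_zero]
    · rw [if_neg (fun h => hT h.2), if_pos ⟨hS, hT⟩, if_pos hS, zero_add]
  · rw [if_neg (fun h => hS h.1), if_neg (fun h => hS h.1), if_neg hS, add_zero]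

end Aux8

set_option maxHeartbeats 2000000

/-- Conditional Law of Large Numbers (finite case): conditionally on `ν^n ∈ Π`, the
empirical type concentrates on the I-projection `p̂` of `q` on `Π`. -/
theorem stmt10 {X : Type*} [Fintype X] [DecidableEq X] (q : X → ℝ)
    (hq_pos : ∀ x, 0 < q x) (hq_sum : ∑ x, q x = 1)
    (Pi : Set (X → ℝ)) (hPisub : Pi ⊆ simplexSet X)
    (hPiconv : Convex ℝ Pi) (hPicl : IsClosed Pi)
    (hPiint : ((interior (Subtype.val ⁻¹' Pi : Set {p : X → ℝ // p ∈ simplexSet X})).Nonempty))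
    (hqPi : q ∉ Pi)
    (phat : X → ℝ) (hphat : phat ∈ Pi)
    (hproj : ∀ p ∈ Pi, Idiv phat q ≤ Idiv p q)
    (huniq : ∀ p ∈ Pi, (∀ p' ∈ Pi, Idiv p q ≤ Idiv p' q) → p = phat) :
    ∀ ε : ℝ, 0 < ε →
      Tendsto (fun n : ℕ =>
          typeProb q (Pi ∩ {p | tvDist p phat ≤ ε}) n / typeProb q Pi n)
        atTop (nhds 1) := by
  intro ε hε
  classical
  have hXne : Nonempty X := by
    by_contra h
    rw [not_nonempty_iff] at h
    rw [Finset.univ_eq_empty, Finset.sum_empty] at hq_sum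
    norm_num at hq_sum
  set DX := Fintype.card X with hDX
  have hDXpos : 0 < DX := Fintype.card_pos
  set B : Set (X → ℝ) := {p | tvDist p phat ≤ ε} with hB
  set Sb : Set (X → ℝ) := Pi \ B with hSb
  set I0 : ℝ := Idiv phat q with hI0
  -- Step 1: find m with I0 < m bounding Idiv below on Sb
  obtain ⟨m, hI0m, hmS⟩ : ∃ m : ℝ, I0 < m ∧ ∀ p ∈ Sb, m ≤ Idiv p q := by
    by_cases hcase : ∃ p ∈ Pi, ¬ (tvDist p phat ≤ ε)
    · obtain ⟨pb, hpbPi, hpbB⟩ := hcase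
      set K : Set (X → ℝ) := Pi ∩ {p | ε ≤ tvDist p phat} with hK
      have hKcl : IsClosed K :=
        hPicl.inter (isClosed_le continuous_const (tvDist_continuous phat))
      have hKcompact : IsCompact K :=
        IsCompact.of_isClosed_subset simplex_isCompact hKcl
          (fun p hp => hPisub hp.1)
      have hKne : K.Nonempty := ⟨pb, hpbPi, le_of_lt (lt_of_not_ge hpbB)⟩
      obtain ⟨pstar, hpstarK, hpstarmin'⟩ :=
        hKcompact.exists_isMinOn hKne (Idiv_continuous q hq_pos).continuousOn
      have hpstarmin : ∀ p ∈ K, Idiv pstar q ≤ Idiv p q :=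
        fun p hp => hpstarmin' hp
      refine ⟨Idiv pstar q, ?_, ?_⟩
      · rcases lt_or_ge I0 (Idiv pstar q) with h | h
        · exact h
        · exfalso
          have heq : Idiv pstar q = I0 := le_antisymm h (hproj pstar hpstarK.1)
          have : pstar = phat := by
            refine huniq pstar hpstarK.1 (fun p' hp' => ?_)
            rw [heq]
            exact hproj p' hp'
          have h0 : ε ≤ tvDist pstar phat := hpstarK.2
          rw [this, tvDist_self] at h0
          linarith
      · intro p hp
        have h2 : ε ≤ tvDist p phat := le_of_lt (lt_of_not_ge hp.2)
        exact hpstarmin p (Set.mem_inter hp.1 h2)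
    · refine ⟨I0 + 1, by linarith, fun p hp => absurd ⟨p, hp.1, hp.2⟩ hcase⟩
  -- Step 2: interior point and positive point p1
  obtain ⟨p0s, hp0s⟩ := hPiint
  obtain ⟨η0, hη0, hball⟩ := Metric.isOpen_iff.1 isOpen_interior p0s hp0s
  have hp0Pi : (p0s : X → ℝ) ∈ Pi := by
    have h := interior_subset hp0s
    exact h
  have hp0simp : (p0s : X → ℝ) ∈ simplexSet X := p0s.2
  have hball0 : ∀ y : X → ℝ, y ∈ simplexSet X → dist y (p0s : X → ℝ) < η0 → y ∈ Pi := by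
    intro y hy hd
    have hm : (⟨y, hy⟩ : {p // p ∈ simplexSet X}) ∈ Metric.ball p0s η0 := by
      rw [Metric.mem_ball, Subtype.dist_eq]
      exact hd
    have h := interior_subset (hball hm)
    exact h
  set θ : ℝ := min η0 1 / 2 with hθ
  have hθpos : 0 < θ := by
    have := lt_min hη0 one_pos
    positivity
  have hθle1 : θ ≤ 1/2 := by
    rw [hθ]
    have : min η0 1 ≤ 1 := min_le_right _ _
    linarith
  have hθltη0 : θ < η0 := by
    rw [hθ]
    rcases le_total η0 1 with h | h
    · rw [min_eq_left h]; linarith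
    · rw [min_eq_right h]; linarith
  set u : X → ℝ := fun _ => 1 / (DX : ℝ) with hu
  have hupos : ∀ x, 0 < u x := fun x => by
    rw [hu]
    have : (0:ℝ) < DX := by exact_mod_cast hDXpos
    positivity
  have husum : ∑ x, u x = 1 := by
    rw [hu, Finset.sum_const, Finset.card_univ, nsmul_eq_mul]
    field_simp
    rw [hDX]
  have hule : ∀ x, u x ≤ 1 := by
    intro x
    rw [← husum]
    exact Finset.single_le_sum (fun y _ => le_of_lt (hupos y)) (Finset.mem_univ x)
  set p1 : X → ℝ := fun x => (1-θ) * (p0s : X → ℝ) x + θ * u x with hp1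
  have hp1x : ∀ x, p1 x = (1-θ) * (p0s : X → ℝ) x + θ * u x := fun x => rfl
  have hp1simp : p1 ∈ simplexSet X := by
    constructor
    · intro x
      rw [hp1x x]
      have h1 := hp0simp.1 x
      have h2 := le_of_lt (hupos x)
      nlinarith
    · rw [hp1]
      simp only []
      rw [Finset.sum_add_distrib, ← Finset.mul_sum, ← Finset.mul_sum, hp0simp.2, husum]
      ring
  have hp1pos : ∀ x, 0 < p1 x := by
    intro x
    rw [hp1x x]
    have h1 := hp0simp.1 x
    have h2 := hupos x
    have : 0 < θ * u x := by positivity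
    nlinarith
  have hp1Pi : p1 ∈ Pi := by
    refine hball0 p1 hp1simp ?_
    refine (dist_pi_lt_iff hη0).2 (fun x => ?_)
    rw [Real.dist_eq]
    have h1 := hp0simp.1 x
    have h2 : (p0s : X → ℝ) x ≤ 1 := by
      rw [← hp0simp.2]
      exact Finset.single_le_sum (fun y _ => hp0simp.1 y) (Finset.mem_univ x)
    have h3 := hupos x
    have h4 := hule x
    have h5 : p1 x - (p0s : X → ℝ) x = θ * (u x - (p0s : X → ℝ) x) := by rw [hp1]; ring
    rw [h5, abs_mul, abs_of_pos hθpos]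
    have h6 : |u x - (p0s : X → ℝ) x| ≤ 1 := by rw [abs_le]; constructor <;> linarith
    nlinarith
  set η1 : ℝ := η0 - θ with hη1
  have hη1pos : 0 < η1 := by rw [hη1]; linarith
  have hball1 : ∀ y : X → ℝ, y ∈ simplexSet X → (∀ x, |y x - p1 x| < η1) → y ∈ Pi := by
    intro y hy hd
    refine hball0 y hy ?_
    have hd1 : dist y p1 < η1 := (dist_pi_lt_iff hη1pos).2 (fun x => by
      rw [Real.dist_eq]; exact hd x)
    have hd2 : dist p1 (p0s : X → ℝ) ≤ θ := by
      refine (dist_pi_le_iff (le_of_lt hθpos)).2 (fun x => ?_)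
      rw [Real.dist_eq]
      have h1 := hp0simp.1 x
      have h2 : (p0s : X → ℝ) x ≤ 1 := by
        rw [← hp0simp.2]
        exact Finset.single_le_sum (fun y _ => hp0simp.1 y) (Finset.mem_univ x)
      have h3 := hupos x
      have h4 := hule x
      have h5 : p1 x - (p0s : X → ℝ) x = θ * (u x - (p0s : X → ℝ) x) := by rw [hp1x x]; ring
      rw [h5, abs_mul, abs_of_pos hθpos]
      have h6 : |u x - (p0s : X → ℝ) x| ≤ 1 := by rw [abs_le]; constructor <;> linarith
      nlinarith
    calc dist y (p0s : X → ℝ) ≤ dist y p1 + dist p1 (p0s : X → ℝ) := dist_triangle _ _ _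
      _ < η1 + θ := by linarith
      _ = η0 := by rw [hη1]; ring
  -- Step 3: pick t and set r
  set δ : ℝ := (m - I0)/3 with hδ
  have hδpos : 0 < δ := by rw [hδ]; linarith
  have hphatsimp : phat ∈ simplexSet X := hPisub hphat
  set F : ℝ → (X → ℝ) := fun t x => (1-t) * phat x + t * p1 x with hF
  have hGcont : Continuous (fun t : ℝ => Idiv (F t) q) := by
    refine (Idiv_continuous q hq_pos).comp ?_
    refine continuous_pi (fun x => ?_)
    exact (continuous_const.sub continuous_id).mul continuous_const |>.add
      (continuous_id.mul continuous_const)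
  have hF0 : F 0 = phat := by funext x; rw [hF]; simp
  obtain ⟨τ, hτpos, hτ⟩ := Metric.continuousAt_iff.1 hGcont.continuousAt δ hδpos
  set t : ℝ := min (τ/2) 1 with ht
  have htpos : 0 < t := lt_min (by linarith) one_pos
  have htle1 : t ≤ 1 := min_le_right _ _
  have hIr : Idiv (F t) q < I0 + δ := by
    have hd : dist t 0 < τ := by
      rw [Real.dist_eq, sub_zero, abs_of_pos htpos]
      calc t ≤ τ/2 := min_le_left _ _
        _ < τ := by linarith
    have := hτ hd
    rw [Real.dist_eq, hF0] at this
    have h2 := abs_lt.1 this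
    rw [hI0]
    linarith [h2.2]
  set r : X → ℝ := F t with hr
  have hrPi : r ∈ Pi := by
    have hconv := hPiconv hphat hp1Pi (by linarith : (0:ℝ) ≤ 1 - t) (le_of_lt htpos)
      (by ring : (1 - t) + t = 1)
    have : r = (1-t) • phat + t • p1 := by
      funext x
      rfl
    rw [this]
    exact hconv
  have hrpos : ∀ x, 0 < r x := by
    intro x
    have h1 := hphatsimp.1 x
    have h2 := hp1pos x
    have : 0 < t * p1 x := by positivity
    have h3 : r x = (1-t) * phat x + t * p1 x := rfl
    nlinarith
  have hrsum : ∑ x, r x = 1 := by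
    have : ∑ x, r x = (1-t) * ∑ x, phat x + t * ∑ x, p1 x := by
      rw [Finset.mul_sum, Finset.mul_sum, ← Finset.sum_add_distrib]
    rw [this, hphatsimp.2, hp1simp.2]
    ring
  -- minimum of p1
  obtain ⟨xm, _, hxm⟩ := Finset.exists_min_image Finset.univ p1 Finset.univ_nonempty
  set m1 : ℝ := p1 xm with hm1
  have hm1pos : 0 < m1 := hp1pos xm
  set η2 : ℝ := min η1 m1 with hη2
  have hη2pos : 0 < η2 := lt_min hη1pos hm1pos
  have hballr : ∀ y : X → ℝ, y ∈ simplexSet X → (∀ x, |y x - r x| < t * η2) → y ∈ Pi := by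
    intro y hy hd
    set y' : X → ℝ := fun x => p1 x + (y x - r x)/t with hy'
    have hy'bound : ∀ x, |y' x - p1 x| < η2 := by
      intro x
      have h1 : y' x - p1 x = (y x - r x)/t := by rw [hy']; ring
      rw [h1, abs_div, abs_of_pos htpos, div_lt_iff₀ htpos]
      calc |y x - r x| < t * η2 := hd x
        _ = η2 * t := by ring
    have hy'simp : y' ∈ simplexSet X := by
      constructor
      · intro x
        have h1 := hy'bound x
        have h2 : p1 x ≥ m1 := hxm x (Finset.mem_univ x)
        have h3 := abs_lt.1 h1
        have h4 : η2 ≤ m1 := min_le_right _ _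
        have h5 : y' x - p1 x > -η2 := h3.1
        linarith
      · have : ∑ x, y' x = ∑ x, p1 x + (∑ x, y x - ∑ x, r x)/t := by
          rw [hy']
          rw [Finset.sum_add_distrib, ← Finset.sum_div, Finset.sum_sub_distrib]
        rw [this, hp1simp.2, hy.2, hrsum]
        ring
    have hy'Pi : y' ∈ Pi := by
      refine hball1 y' hy'simp (fun x => ?_)
      calc |y' x - p1 x| < η2 := hy'bound x
        _ ≤ η1 := min_le_left _ _
    have hconv := hPiconv hphat hy'Pi (by linarith : (0:ℝ) ≤ 1 - t) (le_of_lt htpos)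
      (by ring : (1 - t) + t = 1)
    have hyeq : y = (1-t) • phat + t • y' := by
      funext x
      have h1 : y' x = p1 x + (y x - r x)/t := rfl
      have h2 : r x = (1-t) * phat x + t * p1 x := rfl
      have ht0 : t ≠ 0 := ne_of_gt htpos
      show y x = (1-t) * phat x + t * y' x
      rw [h1]
      rw [mul_add, mul_div_cancel₀ _ ht0]
      rw [show (1-t) * phat x + (t * p1 x + (y x - r x)) = ((1-t) * phat x + t * p1 x) + y x - r x by ring, ← h2]
      ring
    rw [hyeq]
    exact hconv
  -- Step 4: choose ρ
  set C : ℝ := ∑ x, |Real.log (q x / r x)| with hC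
  have hCnn : 0 ≤ C := Finset.sum_nonneg (fun x _ => abs_nonneg _)
  set ρ : ℝ := min (t * η2) (δ/(C+1)) with hρ
  have hρpos : 0 < ρ := lt_min (by positivity) (by positivity)
  have hρC : ρ * C ≤ δ := by
    have h1 : ρ ≤ δ/(C+1) := min_le_right _ _
    have h2 : ρ * C ≤ (δ/(C+1)) * C := mul_le_mul_of_nonneg_right h1 hCnn
    have h3 : (δ/(C+1)) * C ≤ δ := by
      rw [div_mul_eq_mul_div, div_le_iff₀ (by linarith)]
      nlinarith
    linarith
  set N : ℕ := max 1 (Nat.ceil (2*(DX : ℝ)/ρ^2)) with hN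
  -- lower bound eventually
  have hlow : ∀ n : ℕ, n ≥ N →
      (1/2) * Real.exp (-((n:ℝ) * (I0 + 2*δ))) ≤ typeProb q Pi n := by
    intro n hn
    have hn1 : 0 < n := lt_of_lt_of_le one_pos (le_trans (le_max_left _ _) hn)
    have hnr : (2*(DX : ℝ)/ρ^2) ≤ (n : ℝ) := by
      have := le_trans (le_max_right 1 (Nat.ceil (2*(DX : ℝ)/ρ^2))) hn
      exact_mod_cast le_trans (Nat.le_ceil _) (by exact_mod_cast this)
    have hcond : (DX : ℝ) / ((n:ℝ) * ρ^2) ≤ 1/2 := by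
      have hnpos : (0:ℝ) < n := by exact_mod_cast hn1
      rw [div_le_iff₀ (by positivity)]
      rw [div_le_iff₀ (by positivity)] at hnr
      nlinarith
    have := typeProb_ge q hq_pos r hrpos hrsum ρ hρpos Pi
      (fun p hp h => hballr p hp (fun x => lt_of_lt_of_le (h x) (min_le_left _ _)))
      n hn1 hcond
    refine le_trans ?_ this
    refine mul_le_mul_of_nonneg_left ?_ (by norm_num)
    rw [Real.exp_le_exp]
    have h1 : Idiv r q + ρ * C ≤ I0 + 2*δ := by
      linarith [hIr, hρC]
    have hnn : (0:ℝ) ≤ n := Nat.cast_nonneg n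
    nlinarith
  -- upper bound
  have hup : ∀ n : ℕ, n ≥ N →
      typeProb q Sb n ≤ ((n:ℝ)+1)^DX * Real.exp (-((n:ℝ)*m)) := by
    intro n hn
    have hn1 : 0 < n := lt_of_lt_of_le one_pos (le_trans (le_max_left _ _) hn)
    exact typeProb_le q hq_pos Sb n hn1 m (fun s hs => hmS _ hs)
  -- error term tends to zero
  have hEz : Tendsto (fun n : ℕ => typeProb q Sb n / typeProb q Pi n) atTop (nhds 0) := by
    have hm3 : m = I0 + 3*δ := by rw [hδ]; ring
    have hbound : ∀ n : ℕ, n ≥ N →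
        typeProb q Sb n / typeProb q Pi n ≤ 2 * ((n:ℝ)+1)^DX * Real.exp (-(δ*(n:ℝ))) := by
      intro n hn
      have h1 := hlow n hn
      have h2 := hup n hn
      have hpos : (0:ℝ) < (1/2) * Real.exp (-((n:ℝ) * (I0 + 2*δ))) := by positivity
      have h3 : typeProb q Sb n / typeProb q Pi n
          ≤ (((n:ℝ)+1)^DX * Real.exp (-((n:ℝ)*m))) / ((1/2) * Real.exp (-((n:ℝ) * (I0 + 2*δ)))) := by
        refine div_le_div₀ (by positivity) h2 hpos h1
      refine le_trans h3 (le_of_eq ?_)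
      have he : Real.exp (-((n:ℝ)*m)) = Real.exp (-((n:ℝ) * (I0 + 2*δ))) * Real.exp (-(δ*(n:ℝ))) := by
        rw [← Real.exp_add]
        congr 1
        rw [hm3]
        ring
      rw [he]
      field_simp
    have htail := tail_tendsto DX δ hδpos 2
    refine squeeze_zero' ?_ ?_ htail
    · filter_upwards [eventually_ge_atTop N] with n hn
      exact div_nonneg (typeProb_nonneg q hq_pos Sb n)
        (typeProb_nonneg q hq_pos Pi n)
    · filter_upwards [eventually_ge_atTop N] with n hn
      exact hbound n hn
  -- conclude
  have hone : Tendsto (fun n : ℕ => 1 - typeProb q Sb n / typeProb q Pi n) atTop (nhds 1) := by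
    have h := (tendsto_const_nhds : Tendsto (fun _ : ℕ => (1:ℝ)) atTop (nhds 1)).sub hEz
    simpa using h
  refine hone.congr' ?_
  filter_upwards [eventually_ge_atTop N] with n hn
  have hpos : (0:ℝ) < typeProb q Pi n :=
    lt_of_lt_of_le (by positivity) (hlow n hn)
  have hsplit := typeProb_split q Pi B n
  rw [eq_div_iff (ne_of_gt hpos)]
  rw [sub_mul, one_mul, div_mul_cancel₀ _ (ne_of_gt hpos)]
  rw [← hsplit]
  ring
end

section
/- (Convex duality for I-projection on a linear family) Let q be a strictly positive pmf on a finite set X = {x₁,...,x_m}, and let Π = {p : ∑_x p(x)u_j(x) = 0, j = 1,...,J} be nonempty with a strictly positive element. Then min_{p∈Π} I(p||q) = max_{λ∈ℝ^J} [ -log ∑_{i=1}^m q(x_i) exp(-∑_{j=1}^J λ_j u_j(x_i)) ], and the optimal p* has the exponential form p*(x) = q(x)exp(-∑_j λ*_j u_j(x)) / ∑_{x'} q(x')exp(-∑_j λ*_j u_j(x')). -/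
open Finset Real

/-- Convex duality for the I-projection on a linear family defined by estimating
functions `u_j`. -/
theorem stmt12 {X : Type*} [Fintype X] (q : X → ℝ)
    (hq_pos : ∀ x, 0 < q x) (hq_sum : ∑ x, q x = 1)
    {J : ℕ} (u : Fin J → X → ℝ)
    (Pi : Set (X → ℝ))
    (hPi : Pi = {p | (∀ x, 0 ≤ p x) ∧ ∑ x, p x = 1 ∧ ∀ j, ∑ x, p x * u j x = 0})
    (hSlater : ∃ p ∈ Pi, ∀ x, 0 < p x)
    (lamStar : Fin J → ℝ)
    (hAttained : ∀ lam : Fin J → ℝ,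
      -Real.log (∑ x, q x * Real.exp (-(∑ j, lam j * u j x))) ≤
      -Real.log (∑ x, q x * Real.exp (-(∑ j, lamStar j * u j x)))) :
    ∃ pStar ∈ Pi,
      (∀ p ∈ Pi, Idiv pStar q ≤ Idiv p q) ∧
      Idiv pStar q = -Real.log (∑ x, q x * Real.exp (-(∑ j, lamStar j * u j x))) ∧
      ∀ x, pStar x =
        q x * Real.exp (-(∑ j, lamStar j * u j x)) /
          (∑ x', q x' * Real.exp (-(∑ j, lamStar j * u j x'))) := by
  classical
  -- X is nonempty
  obtain ⟨p₀, hp₀, hp₀pos⟩ := hSlater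
  rw [hPi] at hp₀
  obtain ⟨hp₀nn, hp₀sum, hp₀mom⟩ := hp₀
  have hne : Nonempty X := by
    by_contra h
    rw [not_nonempty_iff] at h
    simp at hp₀sum
  set S : X → ℝ := fun x => ∑ j, lamStar j * u j x with hS
  set Z : ℝ := ∑ x, q x * Real.exp (-(S x)) with hZdef
  have hZpos : 0 < Z :=
    Finset.sum_pos (fun x _ => mul_pos (hq_pos x) (Real.exp_pos _)) Finset.univ_nonempty
  set pStar : X → ℝ := fun x => q x * Real.exp (-(S x)) / Z with hpStarDef
  -- first-order condition: moments of q·exp(-S) vanish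
  have hmom : ∀ j, ∑ x, q x * Real.exp (-(S x)) * u j x = 0 := by
    intro j
    set g : ℝ → ℝ := fun t => ∑ x, q x * Real.exp (-(S x + t * u j x)) with hg
    have hgt : ∀ t, 0 < g t := fun t =>
      Finset.sum_pos (fun x _ => mul_pos (hq_pos x) (Real.exp_pos _)) Finset.univ_nonempty
    have hg0 : g 0 = Z := by simp [hg, hZdef]
    have hderiv : HasDerivAt g (∑ x, q x * Real.exp (-(S x)) * (-(u j x))) 0 := by
      have hx : ∀ x ∈ Finset.univ, HasDerivAt (fun t => q x * Real.exp (-(S x + t * u j x)))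
          (q x * Real.exp (-(S x)) * (-(u j x))) 0 := by
        intro x _
        have h1 : HasDerivAt (fun t : ℝ => -(S x + t * u j x)) (-(u j x)) 0 := by
          have h := (((hasDerivAt_id' (0:ℝ)).mul_const (u j x)).const_add (S x)).fun_neg
          simpa only [one_mul] using h
        have h2 := h1.exp
        have h3 := h2.const_mul (q x)
        simpa only [zero_mul, add_zero, ← mul_assoc] using h3
      exact HasDerivAt.fun_sum hx
    have hmax : IsLocalMax (fun t => -Real.log (g t)) 0 := by
      refine Filter.Eventually.of_forall (fun t => ?_)
      have hlam := hAttained (fun j' => lamStar j' + if j' = j then t else 0)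
      have hkey : ∀ x, (∑ j', (lamStar j' + if j' = j then t else 0) * u j' x)
          = S x + t * u j x := by
        intro x
        rw [hS]
        simp [add_mul, Finset.sum_add_distrib, ite_mul, Finset.sum_ite_eq']
      simp only [hkey] at hlam
      simpa [hg, hg0] using hlam
    have hderivlog : HasDerivAt (fun t => -Real.log (g t))
        (-((∑ x, q x * Real.exp (-(S x)) * (-(u j x))) / g 0)) 0 :=
      (hderiv.log (hgt 0).ne').neg
    have h0 := hmax.hasDerivAt_eq_zero hderivlog
    have hD : (∑ x, q x * Real.exp (-(S x)) * (-(u j x))) = 0 := by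
      have h1 : (∑ x, q x * Real.exp (-(S x)) * (-(u j x))) / g 0 = 0 := by
        linarith [h0]
      rcases div_eq_zero_iff.mp h1 with h | h
      · exact h
      · exact absurd h (hgt 0).ne'
    have : -(∑ x, q x * Real.exp (-(S x)) * u j x) = 0 := by
      rw [← hD]
      simp [mul_neg]
    linarith
  have hpStarpos : ∀ x, 0 < pStar x := fun x =>
    div_pos (mul_pos (hq_pos x) (Real.exp_pos _)) hZpos
  have hpStarsum : ∑ x, pStar x = 1 := by
    rw [hpStarDef]
    rw [← Finset.sum_div, ← hZdef, div_self hZpos.ne']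
  have hpStarmom : ∀ j, ∑ x, pStar x * u j x = 0 := by
    intro j
    have : ∑ x, pStar x * u j x = (∑ x, q x * Real.exp (-(S x)) * u j x) / Z := by
      rw [Finset.sum_div]
      exact Finset.sum_congr rfl fun x _ => by rw [hpStarDef]; ring
    rw [this, hmom j, zero_div]
  -- for any p satisfying the moment constraints, the sum against S vanishes
  have hpS : ∀ p : X → ℝ, (∀ j, ∑ x, p x * u j x = 0) → ∑ x, p x * S x = 0 := by
    intro p hpm
    have hc : ∑ x, p x * S x = ∑ j, lamStar j * ∑ x, p x * u j x := by
      simp only [hS, Finset.mul_sum]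
      rw [Finset.sum_comm]
      exact Finset.sum_congr rfl fun j _ => Finset.sum_congr rfl fun x _ => by ring
    rw [hc]
    simp [hpm]
  -- value of ∑ p (−S − log Z) for constrained p
  have hval : ∀ p : X → ℝ, ∑ x, p x = 1 → (∀ j, ∑ x, p x * u j x = 0) →
      ∑ x, p x * (-(S x) - Real.log Z) = -Real.log Z := by
    intro p hsum hpm
    have : ∑ x, p x * (-(S x) - Real.log Z)
        = -(∑ x, p x * S x) - (∑ x, p x) * Real.log Z := by
      rw [← Finset.sum_neg_distrib, Finset.sum_mul, ← Finset.sum_sub_distrib]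
      exact Finset.sum_congr rfl fun x _ => by ring
    rw [this, hpS p hpm, hsum]
    ring
  -- log of the ratio pStar/q
  have hlogratio : ∀ x, Real.log (pStar x / q x) = -(S x) - Real.log Z := by
    intro x
    have hr : pStar x / q x = Real.exp (-(S x)) / Z := by
      rw [hpStarDef]
      show q x * Real.exp (-(S x)) / Z / q x = _
      rw [div_div, mul_comm Z (q x), mul_div_mul_left _ _ (hq_pos x).ne']
    rw [hr, Real.log_div (Real.exp_pos _).ne' hZpos.ne', Real.log_exp]
  have hIdivStar : Idiv pStar q = -Real.log Z := by
    unfold Idiv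
    have : ∑ x, pStar x * Real.log (pStar x / q x)
        = ∑ x, pStar x * (-(S x) - Real.log Z) :=
      Finset.sum_congr rfl fun x _ => by rw [hlogratio x]
    rw [this, hval pStar hpStarsum hpStarmom]
  refine ⟨pStar, ?_, ?_, hIdivStar, fun x => rfl⟩
  · rw [hPi]
    exact ⟨fun x => (hpStarpos x).le, hpStarsum, hpStarmom⟩
  · intro p hp
    rw [hPi] at hp
    obtain ⟨hnn, hsum, hpm⟩ := hp
    rw [hIdivStar]
    have key : ∀ x, (p x - pStar x) + p x * (-(S x) - Real.log Z)
        ≤ p x * Real.log (p x / q x) := by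
      intro x
      rcases eq_or_lt_of_le (hnn x) with h | h
      · rw [← h]
        simp
        exact (hpStarpos x).le
      · have hq' := hq_pos x
        have hps := hpStarpos x
        have hlog : Real.log (p x / q x)
            = Real.log (p x / pStar x) + Real.log (pStar x / q x) := by
          rw [← Real.log_mul (by positivity) (by positivity)]
          congr 1
          field_simp
        rw [hlog, hlogratio x, mul_add]
        have hgibbs : p x - pStar x ≤ p x * Real.log (p x / pStar x) := by
          have h1 : Real.log (pStar x / p x) ≤ pStar x / p x - 1 :=
            Real.log_le_sub_one_of_pos (by positivity)
          have h2 : Real.log (pStar x / p x) = -Real.log (p x / pStar x) := by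
            rw [← Real.log_inv]
            congr 1
            field_simp
          have h3 : 1 - pStar x / p x ≤ Real.log (p x / pStar x) := by
            rw [h2] at h1; linarith
          calc p x - pStar x = p x * (1 - pStar x / p x) := by field_simp
            _ ≤ p x * Real.log (p x / pStar x) :=
                mul_le_mul_of_nonneg_left h3 h.le
        nlinarith [hgibbs]
    calc -Real.log Z = (∑ x, (p x - pStar x)) + ∑ x, p x * (-(S x) - Real.log Z) := by
          rw [Finset.sum_sub_distrib, hsum, hpStarsum, hval p hsum hpm]
          ring
      _ = ∑ x, ((p x - pStar x) + p x * (-(S x) - Real.log Z)) := by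
          rw [Finset.sum_add_distrib]
      _ ≤ ∑ x, p x * Real.log (p x / q x) :=
          Finset.sum_le_sum fun x _ => key x
      _ = Idiv p q := rfl
end

section
/- (Pythagorean identity for I-projection) Let q be a strictly positive pmf on a finite set X and let Π = {p : ∑_x p(x)u_j(x) = 0, j=1,...,J} be a linear family containing a strictly positive pmf. If p̂ is the I-projection of q on Π, then for every p ∈ Π: I(p||q) = I(p||p̂) + I(p̂||q). -/
open Finset Real

/-- Derivative of a single term of the I-divergence along a line. -/
lemma term_hasDerivAt (a d c : ℝ) (hc : 0 < c) (t : ℝ) (h : 0 < a + t * d) :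
    HasDerivAt (fun s => (a + s * d) * Real.log ((a + s * d) / c))
      (d * (Real.log ((a + t * d) / c) + 1)) t := by
  have hL : HasDerivAt (fun s : ℝ => a + s * d) d t := by
    simpa using ((hasDerivAt_id t).mul_const d).const_add a
  have hLd : HasDerivAt (fun s : ℝ => (a + s * d) / c) (d / c) t := hL.div_const c
  have hne : (a + t * d) / c ≠ 0 := (div_pos h hc).ne'
  have hlog : HasDerivAt (fun s : ℝ => Real.log ((a + s * d) / c))
      ((d / c) / ((a + t * d) / c)) t := hLd.log hne
  have hmul := hL.mul hlog
  have e : d * (Real.log ((a + t * d) / c) + 1)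
      = d * Real.log ((a + t * d) / c) + (a + t * d) * ((d / c) / ((a + t * d) / c)) := by
    rw [div_div_div_cancel_right₀ hc.ne', mul_div_cancel₀ _ h.ne']
    ring
  rw [e]
  exact hmul

/-- Pythagorean identity for the I-projection on a linear family:
`I(p‖q) = I(p‖p̂) + I(p̂‖q)` for every `p ∈ Π`. -/
theorem stmt13 {X : Type*} [Fintype X] (q : X → ℝ)
    (hq_pos : ∀ x, 0 < q x) (hq_sum : ∑ x, q x = 1)
    {J : ℕ} (u : Fin J → X → ℝ)
    (Pi : Set (X → ℝ))
    (hPi : Pi = {p | (∀ x, 0 ≤ p x) ∧ ∑ x, p x = 1 ∧ ∀ j, ∑ x, p x * u j x = 0})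
    (hSlater : ∃ p ∈ Pi, ∀ x, 0 < p x)
    (phat : X → ℝ) (hphat : phat ∈ Pi)
    (hproj : ∀ p ∈ Pi, Idiv phat q ≤ Idiv p q) :
    ∀ p ∈ Pi, Idiv p q = Idiv p phat + Idiv phat q := by
  classical
  rcases isEmpty_or_nonempty X with hX | hX
  · exact absurd hq_sum (by simp)
  obtain ⟨ps, hpsPi, hps_pos⟩ := hSlater
  subst hPi
  simp only [Set.mem_setOf_eq] at hphat hpsPi
  obtain ⟨hphat_nn, hphat_sum, hphat_con⟩ := hphat
  obtain ⟨hps_nn, hps_sum, hps_con⟩ := hpsPi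
  -- Step 1: the I-projection is strictly positive everywhere
  have hphat_pos : ∀ x, 0 < phat x := by
    intro x0
    rcases (hphat_nn x0).lt_or_eq with hlt | heq
    · exact hlt
    exfalso
    set d : X → ℝ := fun x => ps x - phat x with hd
    have hsum_d : ∑ x, d x = 0 := by
      simp [hd, Finset.sum_sub_distrib, hps_sum, hphat_sum]
    have hsum_du : ∀ j, ∑ x, d x * u j x = 0 := by
      intro j
      have : ∑ x, d x * u j x = ∑ x, ps x * u j x - ∑ x, phat x * u j x := by
        rw [← Finset.sum_sub_distrib]; congr 1; ext x; simp [hd]; ring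
      rw [this, hps_con j, hphat_con j, sub_zero]
    set Z : Finset X := Finset.univ.filter (fun x => phat x = 0) with hZ
    have hx0Z : x0 ∈ Z := by simp [hZ, heq.symm]
    set Zc : Finset X := Finset.univ.filter (fun x => ¬ phat x = 0) with hZc
    set S : ℝ := ∑ x ∈ Z, ps x with hS
    set C : ℝ := ∑ x ∈ Z, ps x * Real.log (ps x / q x) with hC
    have hSpos : 0 < S := Finset.sum_pos' (fun x _ => (hps_pos x).le) ⟨x0, hx0Z, hps_pos x0⟩
    set g : ℝ → ℝ := fun t => ∑ x ∈ Zc, (phat x + t * d x) * Real.log ((phat x + t * d x) / q x)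
      with hg
    set gd : ℝ := ∑ x ∈ Zc, d x * (Real.log ((phat x + 0 * d x) / q x) + 1) with hgd
    have hZcpos : ∀ x ∈ Zc, 0 < phat x := by
      intro x hx
      rw [hZc, Finset.mem_filter] at hx
      exact (hphat_nn x).lt_of_ne (Ne.symm hx.2)
    have hder : HasDerivAt g gd 0 := by
      apply HasDerivAt.fun_sum
      intro x hx
      exact term_hasDerivAt (phat x) (d x) (q x) (hq_pos x) 0 (by simpa using hZcpos x hx)
    have hslope : Filter.Tendsto (slope g 0) (nhdsWithin 0 (Set.Ioi 0)) (nhds gd) := by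
      refine (hasDerivAt_iff_tendsto_slope.mp hder).mono_left (nhdsWithin_mono _ ?_)
      intro t ht
      exact (Set.mem_Ioi.mp ht).ne'
    have hbot : Filter.Tendsto (fun t => slope g 0 t + (S * Real.log t + C))
        (nhdsWithin 0 (Set.Ioi 0)) Filter.atBot := by
      refine hslope.add_atBot ?_
      exact Filter.tendsto_atBot_add_const_right _ C
        (Real.tendsto_log_nhdsGT_zero.const_mul_atBot hSpos)
    have hneg : ∀ᶠ t in nhdsWithin 0 (Set.Ioi 0),
        slope g 0 t + (S * Real.log t + C) < 0 :=
      hbot.eventually (Filter.eventually_lt_atBot 0)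
    have hge : ∀ᶠ t in nhdsWithin 0 (Set.Ioi 0),
        0 ≤ slope g 0 t + (S * Real.log t + C) := by
      filter_upwards [Ioc_mem_nhdsGT_of_mem (Set.left_mem_Ico.mpr one_pos)] with t ht
      obtain ⟨ht0, ht1⟩ := ht
      -- the perturbed point is in Π
      set pt : X → ℝ := fun x => phat x + t * d x with hpt
      have hptPi : (∀ x, 0 ≤ pt x) ∧ ∑ x, pt x = 1 ∧ ∀ j, ∑ x, pt x * u j x = 0 := by
        refine ⟨?_, ?_, ?_⟩
        · intro x
          have : pt x = (1 - t) * phat x + t * ps x := by simp [hpt, hd]; ring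
          rw [this]
          have h1 : 0 ≤ (1 - t) * phat x :=
            mul_nonneg (by linarith) (hphat_nn x)
          have h2 : 0 ≤ t * ps x := mul_nonneg ht0.le (hps_pos x).le
          linarith
        · have : ∑ x, pt x = (∑ x, phat x) + t * ∑ x, d x := by
            rw [Finset.mul_sum, ← Finset.sum_add_distrib]
          rw [this, hphat_sum, hsum_d]; ring
        · intro j
          have : ∑ x, pt x * u j x = (∑ x, phat x * u j x) + t * ∑ x, d x * u j x := by
            rw [Finset.mul_sum, ← Finset.sum_add_distrib]
            congr 1; ext x; simp [hpt]; ring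
          rw [this, hphat_con j, hsum_du j]; ring
      have hle := hproj pt hptPi
      -- compute Idiv pt q
      have hIpt : Idiv pt q = t * (S * Real.log t + C) + g t := by
        rw [Idiv, ← Finset.sum_filter_add_sum_filter_not Finset.univ (fun x => phat x = 0)]
        congr 1
        · rw [← hZ]
          have hstep : ∑ x ∈ Z, pt x * Real.log (pt x / q x)
              = ∑ x ∈ Z, t * (ps x * Real.log t + ps x * Real.log (ps x / q x)) := by
            refine Finset.sum_congr rfl ?_
            intro x hx
            rw [hZ, Finset.mem_filter] at hx
            have hx0 : phat x = 0 := hx.2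
            have hdx : d x = ps x := by simp [hd, hx0]
            have hterm : pt x = t * ps x := by simp [hpt, hx0, hdx]
            rw [hterm]
            have hlog : Real.log (t * ps x / q x) = Real.log t + Real.log (ps x / q x) := by
              rw [mul_div_assoc, Real.log_mul ht0.ne' (div_pos (hps_pos x) (hq_pos x)).ne']
            rw [hlog]; ring
          rw [hstep, ← Finset.mul_sum, Finset.sum_add_distrib, ← Finset.sum_mul, ← hS, ← hC]
      have hI0 : Idiv phat q = g 0 := by
        rw [Idiv, ← Finset.sum_filter_add_sum_filter_not Finset.univ (fun x => phat x = 0)]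
        have h1 : ∑ x ∈ Z, phat x * Real.log (phat x / q x) = 0 := by
          refine Finset.sum_eq_zero ?_
          intro x hx
          rw [hZ, Finset.mem_filter] at hx
          simp [hx.2]
        rw [hZ] at h1
        rw [h1, zero_add, hg]
        refine Finset.sum_congr rfl ?_
        intro x _; norm_num
      rw [hIpt, hI0] at hle
      have hkey : 0 ≤ (g t - g 0 + t * (S * Real.log t + C)) / t :=
        div_nonneg (by linarith) ht0.le
      have heq2 : (g t - g 0 + t * (S * Real.log t + C)) / t
          = slope g 0 t + (S * Real.log t + C) := by
        rw [slope_def_field]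
        field_simp
        ring
      rwa [heq2] at hkey
    obtain ⟨t, h1, h2⟩ := (hneg.and hge).exists
    linarith
  -- Step 2: first-order condition
  intro p hp
  simp only [Set.mem_setOf_eq] at hp
  obtain ⟨hp_nn, hp_sum, hp_con⟩ := hp
  set d : X → ℝ := fun x => p x - phat x with hd
  have hsum_d : ∑ x, d x = 0 := by
    simp [hd, Finset.sum_sub_distrib, hp_sum, hphat_sum]
  have hsum_du : ∀ j, ∑ x, d x * u j x = 0 := by
    intro j
    have : ∑ x, d x * u j x = ∑ x, p x * u j x - ∑ x, phat x * u j x := by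
      rw [← Finset.sum_sub_distrib]; congr 1; ext x; simp [hd]; ring
    rw [this, hp_con j, hphat_con j, sub_zero]
  obtain ⟨ε, hεpos, hεle⟩ : ∃ ε > 0, ∀ x, ε * (|d x| + 1) ≤ phat x := by
    obtain ⟨x0, _, hx0⟩ := Finset.exists_min_image Finset.univ
      (fun x => phat x / (|d x| + 1)) ⟨Classical.arbitrary X, Finset.mem_univ _⟩
    refine ⟨phat x0 / (|d x0| + 1), div_pos (hphat_pos x0) (by positivity), ?_⟩
    intro x
    have h1 : phat x0 / (|d x0| + 1) ≤ phat x / (|d x| + 1) := hx0 x (Finset.mem_univ x)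
    have h2 : 0 < |d x| + 1 := by positivity
    calc phat x0 / (|d x0| + 1) * (|d x| + 1)
        ≤ phat x / (|d x| + 1) * (|d x| + 1) := mul_le_mul_of_nonneg_right h1 h2.le
      _ = phat x := div_mul_cancel₀ _ h2.ne'
  have hpos_t : ∀ t ∈ Set.Ioo (-ε) ε, ∀ x, 0 < phat x + t * d x := by
    intro t ht x
    have habs : |t| ≤ ε := le_of_lt (abs_lt.mpr ⟨ht.1, ht.2⟩)
    have h1 : |t * d x| ≤ ε * |d x| := by
      rw [abs_mul]; exact mul_le_mul_of_nonneg_right habs (abs_nonneg _)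
    have h2 : ε * (|d x| + 1) ≤ phat x := hεle x
    have h3 : -(|t * d x|) ≤ t * d x := neg_abs_le _
    nlinarith
  set f : ℝ → ℝ := fun t => ∑ x, (phat x + t * d x) * Real.log ((phat x + t * d x) / q x)
    with hf
  have hf0 : f 0 = Idiv phat q := by
    rw [hf, Idiv]; refine Finset.sum_congr rfl ?_; intro x _; norm_num
  have hmin : IsLocalMin f 0 := by
    have hmem : Set.Ioo (-ε) ε ∈ nhds (0 : ℝ) := Ioo_mem_nhds (by linarith) hεpos
    filter_upwards [hmem] with t ht
    set pt : X → ℝ := fun x => phat x + t * d x with hpt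
    have hptPi : (∀ x, 0 ≤ pt x) ∧ ∑ x, pt x = 1 ∧ ∀ j, ∑ x, pt x * u j x = 0 := by
      refine ⟨fun x => (hpos_t t ht x).le, ?_, ?_⟩
      · have : ∑ x, pt x = (∑ x, phat x) + t * ∑ x, d x := by
          rw [Finset.mul_sum, ← Finset.sum_add_distrib]
        rw [this, hphat_sum, hsum_d]; ring
      · intro j
        have : ∑ x, pt x * u j x = (∑ x, phat x * u j x) + t * ∑ x, d x * u j x := by
          rw [Finset.mul_sum, ← Finset.sum_add_distrib]
          congr 1; ext x; simp [hpt]; ring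
        rw [this, hphat_con j, hsum_du j]; ring
    have := hproj pt hptPi
    rw [hf0]
    exact this
  have hderiv : HasDerivAt f (∑ x, d x * (Real.log ((phat x + 0 * d x) / q x) + 1)) 0 := by
    apply HasDerivAt.fun_sum
    intro x _
    exact term_hasDerivAt (phat x) (d x) (q x) (hq_pos x) 0 (by simpa using hphat_pos x)
  have hzero := hmin.hasDerivAt_eq_zero hderiv
  have hkey : ∑ x, (p x - phat x) * Real.log (phat x / q x) = 0 := by
    have h1 : ∑ x, d x * (Real.log ((phat x + 0 * d x) / q x) + 1)
        = (∑ x, d x * Real.log (phat x / q x)) + ∑ x, d x := by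
      rw [← Finset.sum_add_distrib]
      refine Finset.sum_congr rfl ?_
      intro x _; norm_num; ring
    rw [h1, hsum_d, add_zero] at hzero
    simpa [hd] using hzero
  -- Step 3: algebra
  have hsplit : ∀ x, p x * Real.log (p x / q x)
      = p x * Real.log (p x / phat x) + p x * Real.log (phat x / q x) := by
    intro x
    rcases (hp_nn x).lt_or_eq with hpx | hpx
    · rw [Real.log_div hpx.ne' (hq_pos x).ne', Real.log_div hpx.ne' (hphat_pos x).ne',
        Real.log_div (hphat_pos x).ne' (hq_pos x).ne']
      ring
    · simp [← hpx]
  have hsum_pL : ∑ x, p x * Real.log (phat x / q x)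
      = ∑ x, phat x * Real.log (phat x / q x) := by
    have h2 : ∑ x, p x * Real.log (phat x / q x) - ∑ x, phat x * Real.log (phat x / q x)
        = 0 := by
      rw [← Finset.sum_sub_distrib]
      rw [← hkey]
      refine Finset.sum_congr rfl ?_
      intro x _; ring
    linarith
  calc Idiv p q = ∑ x, (p x * Real.log (p x / phat x) + p x * Real.log (phat x / q x)) :=
        Finset.sum_congr rfl fun x _ => hsplit x
    _ = Idiv p phat + ∑ x, p x * Real.log (phat x / q x) := by
        rw [Finset.sum_add_distrib]; rfl
    _ = Idiv p phat + Idiv phat q := by rw [hsum_pL]; rfl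
end

section
/- The Tsallis-entropy selection rule can violate the conditional law of large numbers: there exist a finite set X, a strictly positive pmf q on X, and a closed convex set Π of pmfs on X not containing q, such that the maximizer over Π of the Tsallis entropy S_α(p) = (1 - ∑ p(x)^α)/(α - 1) for some α ≠ 1 differs from the I-projection argmin_{p∈Π} I(p||q). -/
open Finset Real

/-- Tsallis entropy with parameter `α`. -/
noncomputable def tsallis {X : Type*} [Fintype X] (α : ℝ) (p : X → ℝ) : ℝ :=
  (1 - ∑ x, p x ^ α) / (α - 1)

/-- Gibbs-type bound: for `0 < t`, `0 < r`, `t - r ≤ t * (log t - log r)`. -/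
lemma gibbs_aux {t r : ℝ} (ht : 0 < t) (hr : 0 < r) :
    t - r ≤ t * (Real.log t - Real.log r) := by
  have h := Real.log_le_sub_one_of_pos (div_pos hr ht)
  rw [Real.log_div hr.ne' ht.ne'] at h
  have h2 : t * (Real.log r - Real.log t) ≤ t * (r / t - 1) :=
    mul_le_mul_of_nonneg_left h ht.le
  have h3 : t * (r / t - 1) = r - t := by field_simp
  nlinarith [h2, h3]

/-- Maximizing Tsallis entropy can violate the conditional law of large numbers: there is a
finite alphabet, a strictly positive sampling pmf `q`, a closed convex feasible set `Π` not
containing `q`, and `α > 0`, `α ≠ 1`, such that some maximizer of the Tsallis entropy over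
`Π` differs from the I-projection of `q` on `Π`. -/
theorem stmt16 :
    ∃ (m : ℕ) (q : Fin m → ℝ) (Pi : Set (Fin m → ℝ)) (α : ℝ),
      (∀ i, 0 < q i) ∧ (∑ i, q i = 1) ∧
      (Pi ⊆ {p : Fin m → ℝ | (∀ i, 0 ≤ p i) ∧ ∑ i, p i = 1}) ∧
      Convex ℝ Pi ∧ IsClosed Pi ∧ q ∉ Pi ∧
      0 < α ∧ α ≠ 1 ∧
      ∃ pT ∈ Pi, ∃ phat ∈ Pi,
        (∀ p ∈ Pi, tsallis α p ≤ tsallis α pT) ∧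
        (∀ p ∈ Pi, Idiv phat q ≤ Idiv p q) ∧
        pT ≠ phat := by
  refine ⟨2, ![4/5, 1/5], {p : Fin 2 → ℝ | 2/5 ≤ p 0 ∧ p 0 ≤ 3/5 ∧ p 0 + p 1 = 1}, 2,
    ?_, ?_, ?_, ?_, ?_, ?_, ?_, ?_,
    ![1/2, 1/2], ⟨by norm_num, by norm_num, by norm_num⟩,
    ![3/5, 2/5], ⟨by norm_num, by norm_num, by norm_num⟩, ?_, ?_, ?_⟩
  · intro i; fin_cases i <;> norm_num
  · simp [Fin.sum_univ_two]; norm_num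
  · rintro p ⟨h1, h2, h3⟩
    refine ⟨fun i => ?_, ?_⟩
    · fin_cases i
      · show (0:ℝ) ≤ p 0; linarith
      · show (0:ℝ) ≤ p 1; linarith
    · rw [Fin.sum_univ_two]; linarith
  · rintro p ⟨hp1, hp2, hp3⟩ r ⟨hr1, hr2, hr3⟩ a b ha hb hab
    refine ⟨?_, ?_, ?_⟩ <;>
      (try simp only [Pi.add_apply, Pi.smul_apply, smul_eq_mul]) <;> (try nlinarith [hp3, hr3])
  · have e : {p : Fin 2 → ℝ | 2/5 ≤ p 0 ∧ p 0 ≤ 3/5 ∧ p 0 + p 1 = 1}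
        = {p : Fin 2 → ℝ | 2/5 ≤ p 0} ∩ ({p | p 0 ≤ 3/5} ∩ {p | p 0 + p 1 = 1}) := by
      ext p; simp [Set.mem_inter_iff]; try tauto
    rw [e]
    exact (isClosed_le continuous_const (continuous_apply 0)).inter
      ((isClosed_le (continuous_apply 0) continuous_const).inter
        (isClosed_eq ((continuous_apply 0).add (continuous_apply 1)) continuous_const))
  · rintro ⟨h1, h2, h3⟩; norm_num at h2
  · norm_num
  · norm_num
  · rintro p ⟨h1, h2, h3⟩
    simp only [tsallis, Fin.sum_univ_two]
    norm_num
    nlinarith [sq_nonneg (p 0 - p 1)]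
  · rintro p ⟨h1, h2, h3⟩
    simp only [Idiv, Fin.sum_univ_two]
    norm_num
    set t := p 0 with htdef
    set s := p 1 with hsdef
    have ht : 0 < t := by linarith
    have hs : 0 < s := by linarith
    rw [Real.log_div ht.ne' (by norm_num : (4/5:ℝ) ≠ 0),
        Real.log_div hs.ne' (by norm_num : (1/5:ℝ) ≠ 0)]
    have g1 : t - 3/5 ≤ t * (Real.log t - Real.log (3/5)) := gibbs_aux ht (by norm_num)
    have g2 : s - 2/5 ≤ s * (Real.log s - Real.log (2/5)) := gibbs_aux hs (by norm_num)
    have l1 : Real.log (3/5) = Real.log 3 - Real.log 5 := by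
      rw [Real.log_div] <;> norm_num
    have l2 : Real.log (2/5) = Real.log 2 - Real.log 5 := by
      rw [Real.log_div] <;> norm_num
    have l3 : Real.log (4/5) = 2 * Real.log 2 - Real.log 5 := by
      rw [Real.log_div, (by norm_num : (4:ℝ) = 2^2), Real.log_pow] <;> norm_num
    have l4 : Real.log (1/5) = - Real.log 5 := by
      rw [Real.log_div] <;> norm_num
    have l5 : Real.log (3/4) = Real.log 3 - 2 * Real.log 2 := by
      rw [Real.log_div, (by norm_num : (4:ℝ) = 2^2), Real.log_pow] <;> norm_num
    have l6 : Real.log 3 ≤ 3 * Real.log 2 := by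
      have := Real.log_le_log (by norm_num : (0:ℝ) < 3) (by norm_num : (3:ℝ) ≤ 8)
      rwa [(by norm_num : (8:ℝ) = 2^3), Real.log_pow] at this
    have key : t * (Real.log t - Real.log (4/5)) + s * (Real.log s - Real.log (1/5))
        - (3/5 * Real.log (3/4) + 2/5 * Real.log 2)
        = (t * (Real.log t - Real.log (3/5)) - (t - 3/5))
          + (s * (Real.log s - Real.log (2/5)) - (s - 2/5))
          + (3/5 - t) * (3 * Real.log 2 - Real.log 3) := by
      rw [l1, l2, l3, l4, l5]
      linear_combination (1 + Real.log 2) * h3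
    have hint : 0 ≤ (3/5 - t) * (3 * Real.log 2 - Real.log 3) :=
      mul_nonneg (by linarith) (by linarith)
    linarith [key, g1, g2, hint]
  · intro h
    have := congrFun h 0
    norm_num at this
end

section
/- For a pmf q on a finite set X with |X| = m and types ν, μ of size n, if I(ν||q) < I(μ||q) then the multinomial probability satisfies π(ν;q) ≥ π(μ;q)·e^{n(I(μ||q)-I(ν||q))}·(n+1)^{-m}; in particular, among all types of size n, the type equal to the maximizer of π(·;q) has I-divergence from q within (m log(n+1))/n of the minimal I-divergence over all types of size n. -/
open Finset Real

/-- Multinomial probability of the type with counts `k`, `∑ k = n`. -/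
noncomputable def multProb {X : Type*} [Fintype X] (q : X → ℝ) (n : ℕ) (k : X → ℕ) : ℝ :=
  (Nat.factorial n : ℝ) * ∏ x, q x ^ (k x) / (Nat.factorial (k x))

lemma MoT.fact_le_pow_mul (b : ℕ) : ∀ a, b ≤ a → a.factorial ≤ a ^ (a - b) * b.factorial := by
  intro a ha
  induction a, ha using Nat.le_induction with
  | base => simp
  | succ a ha ih =>
    calc (a+1).factorial = (a+1) * a.factorial := rfl
      _ ≤ (a+1) * (a ^ (a-b) * b.factorial) := Nat.mul_le_mul_left _ ih
      _ ≤ (a+1) * ((a+1) ^ (a-b) * b.factorial) :=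
          Nat.mul_le_mul_left _ (Nat.mul_le_mul_right _ (Nat.pow_le_pow_left (Nat.le_succ a) _))
      _ = (a+1) ^ (a + 1 - b) * b.factorial := by
          rw [Nat.succ_sub ha, pow_succ]; ring

lemma MoT.pow_fact_key (a b : ℕ) : a ^ b * a.factorial ≤ a ^ a * b.factorial := by
  rcases le_total b a with h | h
  · calc a ^ b * a.factorial ≤ a ^ b * (a ^ (a - b) * b.factorial) :=
        Nat.mul_le_mul_left _ (MoT.fact_le_pow_mul b a h)
      _ = a ^ a * b.factorial := by rw [← mul_assoc, ← pow_add, Nat.add_sub_cancel' h]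
  · have h1 : a.factorial * a ^ (b - a) ≤ b.factorial := by
      calc a.factorial * a ^ (b - a) ≤ a.factorial * (a + 1) ^ (b - a) :=
          Nat.mul_le_mul_left _ (Nat.pow_le_pow_left (Nat.le_succ a) _)
        _ ≤ (a + (b - a)).factorial := Nat.factorial_mul_pow_le_factorial
        _ = b.factorial := by rw [Nat.add_sub_cancel' h]
    calc a ^ b * a.factorial = a ^ a * (a.factorial * a ^ (b - a)) := by
          conv_lhs => rw [← Nat.add_sub_cancel' h, pow_add]
          ring
      _ ≤ a ^ a * b.factorial := Nat.mul_le_mul_left _ h1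

lemma MoT.coord_le (a b : ℕ) : (a:ℝ) ^ b / (b.factorial : ℝ) ≤ (a:ℝ) ^ a / (a.factorial : ℝ) := by
  rw [div_le_div_iff₀ (by exact_mod_cast b.factorial_pos) (by exact_mod_cast a.factorial_pos)]
  exact_mod_cast MoT.pow_fact_key a b

section MoTLemmas

variable {X : Type*} [Fintype X]

lemma MoT.multProb_nonneg (q : X → ℝ) (hq : ∀ x, 0 ≤ q x) (n : ℕ) (k : X → ℕ) :
    0 ≤ multProb q n k := by
  unfold multProb
  apply mul_nonneg (by positivity)
  exact Finset.prod_nonneg fun x _ => div_nonneg (pow_nonneg (hq x) _) (by positivity)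

lemma MoT.multProb_eq_multinomial (q : X → ℝ) (n : ℕ) (k : X → ℕ) (hk : ∑ x, k x = n) :
    multProb q n k = (Nat.multinomial Finset.univ k : ℝ) * ∏ x, q x ^ k x := by
  have hspec := Nat.multinomial_spec Finset.univ k
  rw [hk] at hspec
  have hfac : (0:ℝ) < ∏ x, ((k x).factorial : ℝ) :=
    Finset.prod_pos fun x _ => by exact_mod_cast (k x).factorial_pos
  have hm : (Nat.multinomial Finset.univ k : ℝ)
      = (n.factorial : ℝ) / ∏ x, ((k x).factorial : ℝ) := by
    rw [eq_div_iff hfac.ne', mul_comm]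
    exact_mod_cast congrArg (Nat.cast : ℕ → ℝ) hspec
  unfold multProb
  rw [Finset.prod_div_distrib, hm]
  field_simp

lemma MoT.multProb_type_eq (n : ℕ) (k k' : X → ℕ) (hk' : ∑ x, k' x = n) :
    multProb (fun x => (k x : ℝ)/n) n k' =
      (n.factorial : ℝ) / (n:ℝ)^n * ∏ x, (k x : ℝ) ^ (k' x) / ((k' x).factorial : ℝ) := by
  unfold multProb
  have h : ∀ x : X, ((k x : ℝ)/n) ^ (k' x) / ((k' x).factorial : ℝ) =
      ((k x : ℝ) ^ (k' x) / ((k' x).factorial : ℝ)) * ((1:ℝ)/n) ^ (k' x) := by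
    intro x
    rw [div_pow, div_pow]
    ring
  rw [Finset.prod_congr rfl fun x _ => h x, Finset.prod_mul_distrib,
    Finset.prod_pow_eq_pow_sum, hk', div_pow, one_pow]
  ring

lemma MoT.multProb_self_max (n : ℕ) (k k' : X → ℕ) (hk : ∑ x, k x = n)
    (hk' : ∑ x, k' x = n) :
    multProb (fun x => (k x : ℝ)/n) n k' ≤ multProb (fun x => (k x : ℝ)/n) n k := by
  rw [MoT.multProb_type_eq n k k' hk', MoT.multProb_type_eq n k k hk]
  refine mul_le_mul_of_nonneg_left ?_ (by positivity)
  exact Finset.prod_le_prod (fun x _ => by positivity) (fun x _ => MoT.coord_le (k x) (k' x))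

lemma MoT.multProb_eq_exp (q : X → ℝ) (hq_pos : ∀ x, 0 < q x) (n : ℕ) (hn : 0 < n)
    (k : X → ℕ) :
    multProb q n k = Real.exp (-((n:ℝ) * Idiv (fun x => (k x : ℝ)/n) q)) *
      multProb (fun x => (k x : ℝ)/n) n k := by
  have hnR : (0:ℝ) < n := by exact_mod_cast hn
  have key : ∀ x : X,
      Real.exp (-((n:ℝ) * (((k x : ℝ)/n) * Real.log (((k x : ℝ)/n) / q x)))) *
        ((k x : ℝ)/n) ^ (k x) = q x ^ (k x) := by
    intro x
    rcases Nat.eq_zero_or_pos (k x) with h0 | hpos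
    · simp [h0]
    · set a := k x with ha
      have haR : (0:ℝ) < a := by exact_mod_cast hpos
      have hν : (0:ℝ) < (a:ℝ)/n := by positivity
      have hr : (0:ℝ) < ((a:ℝ)/n) / q x := div_pos hν (hq_pos x)
      have h1 : -((n:ℝ) * (((a:ℝ)/n) * Real.log (((a:ℝ)/n) / q x)))
          = (a:ℝ) * Real.log ((((a:ℝ)/n) / q x)⁻¹) := by
        rw [Real.log_inv]; field_simp
      rw [h1, Real.exp_nat_mul, Real.exp_log (inv_pos.2 hr), ← mul_pow]
      congr 1
      field_simp
  unfold multProb Idiv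
  rw [Finset.mul_sum, ← Finset.sum_neg_distrib, Real.exp_sum]
  have hrhs : ∀ (c : ℝ) (f g : X → ℝ), (∏ x, f x) * (c * ∏ x, g x) = c * ∏ x, f x * g x := by
    intro c f g
    rw [Finset.prod_mul_distrib]; ring
  rw [hrhs]
  congr 1
  refine Finset.prod_congr rfl fun x _ => ?_
  simp only [← mul_div_assoc]
  rw [key x]

variable [DecidableEq X]

lemma MoT.sum_multProb (q : X → ℝ) (n : ℕ) (hq : ∑ x, q x = 1) :
    ∑ k ∈ Finset.piAntidiag Finset.univ n, multProb q n k = 1 := by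
  have h := Finset.sum_pow_eq_sum_piAntidiag Finset.univ q n
  rw [hq, one_pow] at h
  rw [h]
  refine Finset.sum_congr rfl fun k hk => ?_
  rw [Finset.mem_piAntidiag] at hk
  exact MoT.multProb_eq_multinomial q n k hk.1

lemma MoT.card_piAntidiag_le (n : ℕ) :
    ((Finset.piAntidiag (Finset.univ : Finset X) n).card : ℝ)
      ≤ ((n:ℝ)+1) ^ (Fintype.card X) := by
  have hsub : Finset.piAntidiag (Finset.univ : Finset X) n ⊆
      Fintype.piFinset (fun _ : X => Finset.range (n+1)) := by
    intro k hk
    rw [Finset.mem_piAntidiag] at hk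
    rw [Fintype.mem_piFinset]
    intro x
    rw [Finset.mem_range, Nat.lt_succ_iff, ← hk.1]
    exact Finset.single_le_sum (fun _ _ => Nat.zero_le _) (Finset.mem_univ x)
  have h := Finset.card_le_card hsub
  have hcard : (Fintype.piFinset (fun _ : X => Finset.range (n+1))).card
      = (n+1) ^ (Fintype.card X) := by
    simp [Fintype.card_piFinset]
  rw [hcard] at h
  exact_mod_cast h

lemma MoT.type_sum_one (n : ℕ) (hn : 0 < n) (k : X → ℕ) (hk : ∑ x, k x = n) :
    ∑ x, (k x : ℝ)/n = 1 := by
  have hnR : (0:ℝ) < n := by exact_mod_cast hn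
  rw [← Finset.sum_div]
  rw [show ∑ x, (k x : ℝ) = (n:ℝ) by exact_mod_cast congrArg (Nat.cast : ℕ → ℝ) hk]
  field_simp

lemma MoT.type_mem (n : ℕ) (k : X → ℕ) (hk : ∑ x, k x = n) :
    k ∈ Finset.piAntidiag (Finset.univ : Finset X) n := by
  rw [Finset.mem_piAntidiag]
  exact ⟨hk, fun _ _ => Finset.mem_univ _⟩

lemma MoT.multProb_self_le_one (n : ℕ) (hn : 0 < n) (k : X → ℕ) (hk : ∑ x, k x = n) :
    multProb (fun x => (k x : ℝ)/n) n k ≤ 1 := by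
  rw [← MoT.sum_multProb (fun x => (k x : ℝ)/n) n (MoT.type_sum_one n hn k hk)]
  exact Finset.single_le_sum
    (fun k' _ => MoT.multProb_nonneg _ (fun x => by positivity) n k')
    (MoT.type_mem n k hk)

lemma MoT.multProb_self_lower (n : ℕ) (hn : 0 < n) (k : X → ℕ) (hk : ∑ x, k x = n) :
    1 ≤ ((n:ℝ)+1) ^ (Fintype.card X) * multProb (fun x => (k x : ℝ)/n) n k := by
  have hM0 : 0 ≤ multProb (fun x => (k x : ℝ)/n) n k :=
    MoT.multProb_nonneg _ (fun x => by positivity) n k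
  have h1 : (1:ℝ) ≤ ((Finset.piAntidiag (Finset.univ : Finset X) n).card : ℝ) *
      multProb (fun x => (k x : ℝ)/n) n k := by
    rw [← MoT.sum_multProb (fun x => (k x : ℝ)/n) n (MoT.type_sum_one n hn k hk)]
    calc ∑ k' ∈ Finset.piAntidiag (Finset.univ : Finset X) n,
          multProb (fun x => (k x : ℝ)/n) n k'
        ≤ ∑ _k' ∈ Finset.piAntidiag (Finset.univ : Finset X) n,
          multProb (fun x => (k x : ℝ)/n) n k := by
          refine Finset.sum_le_sum fun k' hk' => ?_
          rw [Finset.mem_piAntidiag] at hk'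
          exact MoT.multProb_self_max n k k' hk hk'.1
      _ = _ := by rw [Finset.sum_const, nsmul_eq_mul]
  calc (1:ℝ) ≤ _ := h1
    _ ≤ ((n:ℝ)+1) ^ (Fintype.card X) * multProb (fun x => (k x : ℝ)/n) n k :=
        mul_le_mul_of_nonneg_right (MoT.card_piAntidiag_le n) hM0

lemma MoT.multProb_upper (q : X → ℝ) (hq_pos : ∀ x, 0 < q x) (n : ℕ) (hn : 0 < n)
    (k : X → ℕ) (hk : ∑ x, k x = n) :
    multProb q n k ≤ Real.exp (-((n:ℝ) * Idiv (fun x => (k x : ℝ)/n) q)) := by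
  rw [MoT.multProb_eq_exp q hq_pos n hn k]
  exact mul_le_of_le_one_right (Real.exp_pos _).le (MoT.multProb_self_le_one n hn k hk)

lemma MoT.multProb_lower (q : X → ℝ) (hq_pos : ∀ x, 0 < q x) (n : ℕ) (hn : 0 < n)
    (k : X → ℕ) (hk : ∑ x, k x = n) :
    Real.exp (-((n:ℝ) * Idiv (fun x => (k x : ℝ)/n) q))
      ≤ ((n:ℝ)+1) ^ (Fintype.card X) * multProb q n k := by
  rw [MoT.multProb_eq_exp q hq_pos n hn k]
  have h := MoT.multProb_self_lower n hn k hk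
  calc Real.exp (-((n:ℝ) * Idiv (fun x => (k x : ℝ)/n) q))
      = Real.exp (-((n:ℝ) * Idiv (fun x => (k x : ℝ)/n) q)) * 1 := by ring
    _ ≤ Real.exp (-((n:ℝ) * Idiv (fun x => (k x : ℝ)/n) q)) *
        (((n:ℝ)+1) ^ (Fintype.card X) * multProb (fun x => (k x : ℝ)/n) n k) :=
        mul_le_mul_of_nonneg_left h (Real.exp_pos _).le
    _ = _ := by ring

end MoTLemmas

/-- Comparison of type probabilities via the two-sided method-of-types bounds, and the
consequence that a MaxProb type has I-divergence within `m log(n+1)/n` of the minimal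
I-divergence over types of size `n`. -/
theorem stmt18 {X : Type*} [Fintype X] (q : X → ℝ)
    (hq_pos : ∀ x, 0 < q x) (hq_sum : ∑ x, q x = 1)
    (n : ℕ) (hn : 0 < n) :
    (∀ kν kμ : X → ℕ, ∑ x, kν x = n → ∑ x, kμ x = n →
      Idiv (fun x => (kν x : ℝ) / n) q < Idiv (fun x => (kμ x : ℝ) / n) q →
      multProb q n kν ≥
        multProb q n kμ *
          Real.exp ((n : ℝ) * (Idiv (fun x => (kμ x : ℝ) / n) q -
            Idiv (fun x => (kν x : ℝ) / n) q)) /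
          ((n : ℝ) + 1) ^ (Fintype.card X)) ∧
    (∀ khat : X → ℕ, ∑ x, khat x = n →
      (∀ k : X → ℕ, ∑ x, k x = n → multProb q n k ≤ multProb q n khat) →
      ∀ k : X → ℕ, ∑ x, k x = n →
        Idiv (fun x => (khat x : ℝ) / n) q ≤
          Idiv (fun x => (k x : ℝ) / n) q +
            (Fintype.card X : ℝ) * Real.log ((n : ℝ) + 1) / n) := by
  classical
  have hnR : (0:ℝ) < n := by exact_mod_cast hn
  have hpowpos : (0:ℝ) < ((n:ℝ)+1) ^ (Fintype.card X) := by positivity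
  constructor
  · intro kν kμ hkν hkμ _hlt
    set Iν := Idiv (fun x => (kν x : ℝ) / n) q with hIν
    set Iμ := Idiv (fun x => (kμ x : ℝ) / n) q with hIμ
    have hup := MoT.multProb_upper q hq_pos n hn kμ hkμ
    have hlo := MoT.multProb_lower q hq_pos n hn kν hkν
    rw [ge_iff_le, div_le_iff₀ hpowpos]
    calc multProb q n kμ * Real.exp ((n:ℝ) * (Iμ - Iν))
        ≤ Real.exp (-((n:ℝ) * Iμ)) * Real.exp ((n:ℝ) * (Iμ - Iν)) :=
          mul_le_mul_of_nonneg_right hup (Real.exp_pos _).le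
      _ = Real.exp (-((n:ℝ) * Iν)) := by
          rw [← Real.exp_add]; congr 1; ring
      _ ≤ ((n:ℝ)+1) ^ (Fintype.card X) * multProb q n kν := hlo
      _ = multProb q n kν * ((n:ℝ)+1) ^ (Fintype.card X) := mul_comm _ _
  · intro khat hkhat hmax k hk
    set Ik := Idiv (fun x => (k x : ℝ) / n) q with hIk
    set Ih := Idiv (fun x => (khat x : ℝ) / n) q with hIh
    have h1 := MoT.multProb_lower q hq_pos n hn k hk
    have h2 := hmax k hk
    have h3 := MoT.multProb_upper q hq_pos n hn khat hkhat
    have hpow : ((n:ℝ)+1) ^ (Fintype.card X)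
        = Real.exp ((Fintype.card X : ℝ) * Real.log ((n:ℝ)+1)) := by
      rw [Real.exp_nat_mul, Real.exp_log (by positivity : (0:ℝ) < (n:ℝ)+1)]
    have hchain : Real.exp (-((n:ℝ) * Ik))
        ≤ Real.exp ((Fintype.card X : ℝ) * Real.log ((n:ℝ)+1) + -((n:ℝ) * Ih)) := by
      rw [Real.exp_add, ← hpow]
      calc Real.exp (-((n:ℝ) * Ik)) ≤ ((n:ℝ)+1) ^ (Fintype.card X) * multProb q n k := h1
        _ ≤ ((n:ℝ)+1) ^ (Fintype.card X) * multProb q n khat :=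
            mul_le_mul_of_nonneg_left h2 hpowpos.le
        _ ≤ ((n:ℝ)+1) ^ (Fintype.card X) * Real.exp (-((n:ℝ) * Ih)) :=
            mul_le_mul_of_nonneg_left h3 hpowpos.le
    have hlog := Real.exp_le_exp.mp hchain
    rw [← mul_le_mul_iff_right₀ hnR]
    have heq : (n:ℝ) * (Ik + (Fintype.card X : ℝ) * Real.log ((n:ℝ)+1) / n)
        = (n:ℝ) * Ik + (Fintype.card X : ℝ) * Real.log ((n:ℝ)+1) := by
      field_simp
    rw [heq]
    linarith
end
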